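/- arXiv:1910.09263 — 4 statements merged into one kernel-verified Lean document; each statement's English description precedes it below -/
import Mathlib

section
/- Let (V, ω) be a 2n-dimensional symplectic vector space. For 0 ≤ r ≤ n, the map L^{r} : Λ^{n−r} V* → Λ^{n+r} V*, φ ↦ ω^r ∧ φ, is a linear isomorphism (hard Lefschetz at the level of exterior algebra). -/
set_option synthInstance.maxHeartbeats 1000000
set_option maxHeartbeats 2000000

noncomputable section

/-- The algebra of (constant-coefficient) forms on `V`: the exterior algebra of `V*`. -/
abbrev Forms (V : Type*) [AddCommGroup V] [Module ℝ V] :=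
  ExteriorAlgebra ℝ (Module.Dual ℝ V)

/-- Interior product (contraction) `ι_X` of forms by a vector `X : V`. -/
def interiorV {V : Type*} [AddCommGroup V] [Module ℝ V] (X : V) :
    Forms V →ₗ[ℝ] Forms V :=
  CliffordAlgebra.contractLeft (Module.Dual.eval ℝ V X)

/-- The decomposable form `ψ₁ ∧ ⋯ ∧ ψᵣ`. -/
def wedgeList {V : Type*} [AddCommGroup V] [Module ℝ V] {r : ℕ}
    (ψ : Fin r → Module.Dual ℝ V) : Forms V :=
  (List.ofFn fun i => ExteriorAlgebra.ι ℝ (ψ i)).prod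

/-!
Let `Λ = ∑ᵢ ι_{♯eⁱ} ι_{eᵢ}` be the contraction dual to `L = ω ∧ ·`. On `k`-forms
`[Λ, L] = 2k - 2n`, so `L`, `Λ` and the degree span an `sl₂`-action. If `x` is a `k`-form,
`k ≤ n`, and `L^{n-k} x = 0`, then `Λ x` satisfies the same hypothesis in degree `k - 2`, so
`Λ x = 0` by induction on `k`; for such a primitive `x`,
`Λ L^{m+1} x = (m+1)(2k+2m-2n) L^m x` with a nonzero coefficient for `k + m < n`, and descending
in `m` gives `x = 0`. Hence `L^r` is injective on `Λ^{n-r}`, and it is onto `Λ^{n+r}` because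
both spaces have dimension `C(2n, n-r) = C(2n, n+r)`.
-/

structure IsLefschetzPair {K M : Type*} [Field K] [AddCommGroup M] [Module K M]
    (L Λ : Module.End K M) (grade : ℕ → Submodule K M) (n : ℕ) : Prop where
  L_mem {k : ℕ} {x : M} : x ∈ grade k → L x ∈ grade (k + 2)
  Λ_mem {k : ℕ} {x : M} : x ∈ grade k → Λ x ∈ grade (k - 2)
  Λ_eq_zero {k : ℕ} {x : M} : k < 2 → x ∈ grade k → Λ x = 0
  Λ_L {k : ℕ} {x : M} : x ∈ grade k → Λ (L x) = L (Λ x) + (2 * k - 2 * n : K) • x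

namespace IsLefschetzPair

variable {K M : Type*} [Field K] [AddCommGroup M] [Module K M]
  {L Λ : Module.End K M} {grade : ℕ → Submodule K M} {n k : ℕ} {x : M}

theorem L_pow_mem (h : IsLefschetzPair L Λ grade n) (hx : x ∈ grade k) (m : ℕ) :
    (L ^ m) x ∈ grade (k + 2 * m) := by
  induction m with
  | zero => simpa using hx
  | succ m ih =>
    rw [pow_succ', Module.End.mul_apply, mul_add_one, ← add_assoc]
    exact h.L_mem ih

theorem Λ_L_pow (h : IsLefschetzPair L Λ grade n) (hx : x ∈ grade k) (m : ℕ) :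
    Λ ((L ^ (m + 1)) x) =
      (L ^ (m + 1)) (Λ x) + ((m + 1) * (2 * k + 2 * m - 2 * n) : K) • (L ^ m) x := by
  induction m with
  | zero => simpa using h.Λ_L hx
  | succ m ih =>
    have hsucc (j : ℕ) (y : M) : L ((L ^ j) y) = (L ^ (j + 1)) y := by
      rw [pow_succ', Module.End.mul_apply]
    rw [← hsucc, h.Λ_L (h.L_pow_mem hx (m + 1)), ih, map_add, map_smul, hsucc, hsucc, add_assoc,
      ← add_smul]
    congr 2
    push_cast
    ring

theorem eq_zero_of_Λ_eq_zero [CharZero K] (h : IsLefschetzPair L Λ grade n) (hx : x ∈ grade k)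
    (hΛx : Λ x = 0) {m : ℕ} (hm : k + m ≤ n) (hLx : (L ^ m) x = 0) : x = 0 := by
  induction m with
  | zero => simpa using hLx
  | succ m ih =>
    refine ih (by omega) ?_
    have hcoeff : ((m + 1) * (2 * k + 2 * m - 2 * n) : K) ≠ 0 := by
      have : ((m + 1) * (2 * k + 2 * m - 2 * n) : K) =
          (((m + 1) * (2 * k + 2 * m - 2 * n) : ℤ) : K) := by push_cast; ring
      rw [this, Int.cast_ne_zero]
      exact mul_ne_zero (by omega) (by omega)
    have := h.Λ_L_pow hx m
    rw [hLx, hΛx, map_zero, map_zero, zero_add] at this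
    exact (smul_eq_zero.mp this.symm).resolve_left hcoeff

theorem eq_zero_of_L_pow_eq_zero [CharZero K] (h : IsLefschetzPair L Λ grade n) (hk : k ≤ n)
    (hx : x ∈ grade k) (hLx : (L ^ (n - k)) x = 0) : x = 0 := by
  induction k using Nat.strong_induction_on generalizing x with
  | _ k ih =>
  refine h.eq_zero_of_Λ_eq_zero hx ?_ (Nat.add_sub_cancel' hk).le hLx
  rcases Nat.lt_or_ge k 2 with hk2 | hk2
  · exact h.Λ_eq_zero hk2 hx
  · refine ih (k - 2) (by omega) (by omega) (h.Λ_mem hx) ?_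
    have hL1 : (L ^ (n - k + 1)) x = 0 := by rw [pow_succ', Module.End.mul_apply, hLx, map_zero]
    have hL2 : (L ^ (n - k + 2)) x = 0 := by rw [pow_succ', Module.End.mul_apply, hL1, map_zero]
    have := h.Λ_L_pow hx (n - k + 1)
    rwa [hL2, hL1, map_zero, smul_zero, add_zero, eq_comm,
      show n - k + 1 + 1 = n - (k - 2) by omega] at this

theorem injOn_L_pow [CharZero K] (h : IsLefschetzPair L Λ grade n) (hk : k ≤ n) :
    Set.InjOn (L ^ (n - k)) (grade k) := by
  intro x hx y hy hxy
  rw [← sub_eq_zero]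
  exact h.eq_zero_of_L_pow_eq_zero hk (sub_mem hx hy) (by rw [map_sub, hxy, sub_self])

end IsLefschetzPair

theorem LinearMap.bijOn_of_injOn_of_finrank_eq {K M N : Type*} [Field K] [AddCommGroup M]
    [Module K M] [AddCommGroup N] [Module K N] (f : M →ₗ[K] N) {A : Submodule K M}
    {B : Submodule K N} [FiniteDimensional K A] [FiniteDimensional K B]
    (hmaps : Set.MapsTo f A B) (hinj : Set.InjOn f A)
    (hrank : Module.finrank K A = Module.finrank K B) : Set.BijOn f A B := by
  let g : A →ₗ[K] B := f.restrict hmaps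
  have hg : Function.Injective g := fun x y hxy =>
    Subtype.ext (hinj x.2 y.2 (congrArg Subtype.val hxy))
  refine ⟨hmaps, hinj, fun z hz => ?_⟩
  obtain ⟨x, hx⟩ := (LinearMap.injective_iff_surjective_of_finrank_eq_finrank hrank).mp hg ⟨z, hz⟩
  exact ⟨x, x.2, congrArg Subtype.val hx⟩

section Interior

variable {V : Type*} [AddCommGroup V] [Module ℝ V]

theorem interiorV_add (X Y : V) : interiorV (X + Y) = interiorV X + interiorV Y := by
  simp only [interiorV, map_add]

theorem interiorV_smul (c : ℝ) (X : V) : interiorV (c • X) = c • interiorV X := by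
  simp only [interiorV, map_smul]

theorem interiorV_ι_mul (X : V) (φ : Module.Dual ℝ V) (y : Forms V) :
    interiorV X (ExteriorAlgebra.ι ℝ φ * y) = φ X • y - ExteriorAlgebra.ι ℝ φ * interiorV X y :=
  CliffordAlgebra.contractLeft_ι_mul (Q := 0) _ φ y

theorem interiorV_ι (X : V) (φ : Module.Dual ℝ V) :
    interiorV X (ExteriorAlgebra.ι ℝ φ) = φ X • 1 := by
  rw [interiorV, CliffordAlgebra.contractLeft_ι (Q := 0), Algebra.algebraMap_eq_smul_one]
  rfl

theorem interiorV_eq_zero_of_mem_zero (X : V) {x : Forms V}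
    (hx : x ∈ ⋀[ℝ]^0 (Module.Dual ℝ V)) : interiorV X x = 0 := by
  rw [ExteriorAlgebra.exteriorPower, pow_zero, Submodule.mem_one] at hx
  obtain ⟨c, rfl⟩ := hx
  exact CliffordAlgebra.contractLeft_algebraMap (Q := 0) _ c

theorem ι_mul_mem (φ : Module.Dual ℝ V) {k : ℕ} {y : Forms V}
    (hy : y ∈ ⋀[ℝ]^k (Module.Dual ℝ V)) :
    ExteriorAlgebra.ι ℝ φ * y ∈ ⋀[ℝ]^(k + 1) (Module.Dual ℝ V) := by
  rw [ExteriorAlgebra.exteriorPower, pow_succ']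
  exact Submodule.mul_mem_mul (LinearMap.mem_range_self _ φ) hy

theorem interiorV_mem (X : V) {k : ℕ} {x : Forms V} (hx : x ∈ ⋀[ℝ]^k (Module.Dual ℝ V)) :
    interiorV X x ∈ ⋀[ℝ]^(k - 1) (Module.Dual ℝ V) := by
  induction hx using Submodule.pow_induction_on_left' with
  | algebraMap c =>
    rw [interiorV_eq_zero_of_mem_zero X (Submodule.algebraMap_mem c)]
    exact zero_mem _
  | add x y k _ _ hx hy => rw [map_add]; exact add_mem hx hy
  | mem_mul m hm k x hx ih =>
    obtain ⟨φ, rfl⟩ := hm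
    rw [interiorV_ι_mul]
    refine sub_mem (Submodule.smul_mem _ _ hx) ?_
    rcases k with _ | k
    · rw [interiorV_eq_zero_of_mem_zero X hx, mul_zero]
      exact zero_mem _
    · exact ι_mul_mem φ (by simpa using ih)

theorem interiorV_mul_of_mem_two {w : Forms V} (hw : w ∈ ⋀[ℝ]^2 (Module.Dual ℝ V)) (X : V)
    (y : Forms V) : interiorV X (w * y) = interiorV X w * y + w * interiorV X y := by
  rw [ExteriorAlgebra.exteriorPower, pow_two] at hw
  induction hw using Submodule.mul_induction_on' with
  | mem_mul_mem a ha c hc =>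
    obtain ⟨α, rfl⟩ := ha
    obtain ⟨γ, rfl⟩ := hc
    simp only [mul_assoc, interiorV_ι_mul, interiorV_ι, mul_sub, sub_mul, smul_mul_assoc,
      mul_smul_comm, one_mul]
    abel
  | add u _ v _ hu hv =>
    simp only [add_mul, map_add, hu, hv]
    abel

theorem sum_ι_coord_mul_interiorV {ι : Type*} [Fintype ι] (b : Module.Basis ι ℝ V) {k : ℕ}
    {x : Forms V} (hx : x ∈ ⋀[ℝ]^k (Module.Dual ℝ V)) :
    ∑ i, ExteriorAlgebra.ι ℝ (b.coord i) * interiorV (b i) x = (k : ℝ) • x := by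
  induction hx using Submodule.pow_induction_on_left' with
  | algebraMap c =>
    simp [interiorV_eq_zero_of_mem_zero _ (Submodule.algebraMap_mem c)]
  | add x y k _ _ hx hy => simp only [map_add, mul_add, Finset.sum_add_distrib, hx, hy, smul_add]
  | mem_mul m hm k x hx ih =>
    obtain ⟨φ, rfl⟩ := hm
    have hφ : ∑ i, φ (b i) • ExteriorAlgebra.ι ℝ (b.coord i) = ExteriorAlgebra.ι ℝ φ := by
      simp_rw [← map_smul, ← map_sum, b.sum_dual_apply_smul_coord]
    -- moving `eⁱ` past `ι φ` costs a sign, which cancels the sign in `interiorV_ι_mul`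
    have hterm (i : ι) :
        ExteriorAlgebra.ι ℝ (b.coord i) * interiorV (b i) (ExteriorAlgebra.ι ℝ φ * x) =
        φ (b i) • ExteriorAlgebra.ι ℝ (b.coord i) * x +
          ExteriorAlgebra.ι ℝ φ * (ExteriorAlgebra.ι ℝ (b.coord i) * interiorV (b i) x) := by
      rw [interiorV_ι_mul, mul_sub, mul_smul_comm, ← mul_assoc, ← mul_assoc,
        eq_neg_of_add_eq_zero_left (ExteriorAlgebra.ι_add_mul_swap _ _), smul_mul_assoc]
      noncomm_ring
    rw [Finset.sum_congr rfl fun i _ => hterm i, Finset.sum_add_distrib, ← Finset.sum_mul, hφ,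
      ← Finset.mul_sum, ih, mul_smul_comm, Nat.cast_succ, add_smul, one_smul, add_comm]

end Interior

section Symplectic

variable {V : Type*} [AddCommGroup V] [Module ℝ V] {ι : Type*} [Fintype ι]
  {ω : LinearMap.BilinForm ℝ V} {sharp : Module.Dual ℝ V →ₗ[ℝ] V}

-- `♯ ⊗ ω` sends the canonical tensor `∑ eⁱ ⊗ eᵢ` to `-∑ eᵢ ⊗ eⁱ`, by antisymmetry of `ω`.
theorem sum_sharp_coord_flat (halt : ω.IsAlt) (hsharp' : ∀ X : V, sharp (ω X) = X)
    (b : Module.Basis ι ℝ V) {W : Type*} [AddCommGroup W] [Module ℝ W]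
    (G : V →ₗ[ℝ] Module.Dual ℝ V →ₗ[ℝ] W) :
    ∑ i, G (sharp (b.coord i)) (ω (b i)) = -∑ i, G (b i) (b.coord i) := by
  have hcol (j : ι) : ∑ i, ω (b i) (b j) • sharp (b.coord i) = -b j := by
    simp_rw [← LinearMap.IsAlt.neg halt (b j) (b _), neg_smul, Finset.sum_neg_distrib,
      ← map_smul, ← map_sum, b.sum_dual_apply_smul_coord, hsharp']
  calc ∑ i, G (sharp (b.coord i)) (ω (b i))
      = ∑ i, ∑ j, ω (b i) (b j) • G (sharp (b.coord i)) (b.coord j) := by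
        simp_rw [← map_smul, ← map_sum, b.sum_dual_apply_smul_coord]
    _ = ∑ j, G (∑ i, ω (b i) (b j) • sharp (b.coord i)) (b.coord j) := by
        rw [Finset.sum_comm]
        simp_rw [map_sum, map_smul, LinearMap.sum_apply, LinearMap.smul_apply]
    _ = -∑ i, G (b i) (b.coord i) := by
        simp_rw [hcol, map_neg, LinearMap.neg_apply, Finset.sum_neg_distrib]

def lefschetzDual (sharp : Module.Dual ℝ V →ₗ[ℝ] V) (b : Module.Basis ι ℝ V) :
    Module.End ℝ (Forms V) :=
  ∑ i, interiorV (sharp (b.coord i)) ∘ₗ interiorV (b i)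

theorem lefschetzDual_apply (b : Module.Basis ι ℝ V) (x : Forms V) :
    lefschetzDual sharp b x = ∑ i, interiorV (sharp (b.coord i)) (interiorV (b i) x) := by
  simp [lefschetzDual]

theorem lefschetzDual_mem (b : Module.Basis ι ℝ V) {k : ℕ} {x : Forms V}
    (hx : x ∈ ⋀[ℝ]^k (Module.Dual ℝ V)) :
    lefschetzDual sharp b x ∈ ⋀[ℝ]^(k - 2) (Module.Dual ℝ V) := by
  rw [lefschetzDual_apply]
  exact Submodule.sum_mem _ fun i _ => interiorV_mem _ (interiorV_mem _ hx)

theorem lefschetzDual_eq_zero (b : Module.Basis ι ℝ V) {k : ℕ} {x : Forms V} (hk : k < 2)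
    (hx : x ∈ ⋀[ℝ]^k (Module.Dual ℝ V)) : lefschetzDual sharp b x = 0 := by
  rw [lefschetzDual_apply]
  refine Finset.sum_eq_zero fun i _ => interiorV_eq_zero_of_mem_zero _ ?_
  interval_cases k
  · rw [interiorV_eq_zero_of_mem_zero _ hx]; exact zero_mem _
  · exact interiorV_mem _ hx

variable {ωF : Forms V}

theorem lefschetzDual_mul (halt : ω.IsAlt) (hsharp : ∀ φ : Module.Dual ℝ V, ω (sharp φ) = φ)
    (hsharp' : ∀ X : V, sharp (ω X) = X) (hωF : ωF ∈ ⋀[ℝ]^2 (Module.Dual ℝ V))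
    (hωFcontr : ∀ X : V, interiorV X ωF = ExteriorAlgebra.ι ℝ (ω X))
    (b : Module.Basis ι ℝ V) {k : ℕ} {y : Forms V} (hy : y ∈ ⋀[ℝ]^k (Module.Dual ℝ V)) :
    lefschetzDual sharp b (ωF * y) =
      ωF * lefschetzDual sharp b y + (2 * k - Fintype.card ι : ℝ) • y := by
  have hterm (i : ι) : interiorV (sharp (b.coord i)) (interiorV (b i) (ωF * y)) =
      ω (b i) (sharp (b.coord i)) • y
        - ExteriorAlgebra.ι ℝ (ω (b i)) * interiorV (sharp (b.coord i)) y
        + ExteriorAlgebra.ι ℝ (b.coord i) * interiorV (b i) y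
        + ωF * interiorV (sharp (b.coord i)) (interiorV (b i) y) := by
    rw [interiorV_mul_of_mem_two hωF, hωFcontr, map_add, interiorV_ι_mul,
      interiorV_mul_of_mem_two hωF, hωFcontr, hsharp, add_assoc]
  have htrace (i : ι) : ω (b i) (sharp (b.coord i)) = -1 := by
    rw [← LinearMap.IsAlt.neg halt (sharp _), hsharp, b.coord_apply, b.repr_self,
      Finsupp.single_eq_same]
  have hswap : ∑ i, ExteriorAlgebra.ι ℝ (ω (b i)) * interiorV (sharp (b.coord i)) y =
      -∑ i, ExteriorAlgebra.ι ℝ (b.coord i) * interiorV (b i) y :=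
    sum_sharp_coord_flat halt hsharp' b <| LinearMap.mk₂ ℝ
      (fun X φ => ExteriorAlgebra.ι ℝ φ * interiorV X y)
      (fun X X' φ => by simp [interiorV_add, mul_add])
      (fun c X φ => by simp [interiorV_smul])
      (fun X φ φ' => by simp [add_mul])
      (fun c φ X => by simp)
  simp only [lefschetzDual_apply, hterm, htrace, Finset.sum_add_distrib, Finset.sum_sub_distrib,
    hswap, ← Finset.mul_sum, sum_ι_coord_mul_interiorV b hy]
  simp only [neg_smul, one_smul, Finset.sum_neg_distrib, Finset.sum_const, Finset.card_univ]
  module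

theorem isLefschetzPair_lefschetzDual (halt : ω.IsAlt)
    (hsharp : ∀ φ : Module.Dual ℝ V, ω (sharp φ) = φ) (hsharp' : ∀ X : V, sharp (ω X) = X)
    (hωF : ωF ∈ ⋀[ℝ]^2 (Module.Dual ℝ V))
    (hωFcontr : ∀ X : V, interiorV X ωF = ExteriorAlgebra.ι ℝ (ω X))
    (b : Module.Basis ι ℝ V) {n : ℕ} (hcard : Fintype.card ι = 2 * n) :
    IsLefschetzPair (LinearMap.mulLeft ℝ ωF) (lefschetzDual sharp b)
      (fun k => ⋀[ℝ]^k (Module.Dual ℝ V)) n where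
  L_mem hx := add_comm 2 _ ▸ SetLike.mul_mem_graded hωF hx
  Λ_mem := lefschetzDual_mem b
  Λ_eq_zero := lefschetzDual_eq_zero b
  Λ_L hx := by
    rw [LinearMap.mulLeft_apply, LinearMap.mulLeft_apply,
      lefschetzDual_mul halt hsharp hsharp' hωF hωFcontr b hx, hcard, Nat.cast_mul, Nat.cast_ofNat]

end Symplectic

theorem hard_lefschetz_linear_general
    {V : Type*} [AddCommGroup V] [Module ℝ V] [FiniteDimensional ℝ V]
    (n : ℕ) (hdim : Module.finrank ℝ V = 2 * n)
    (ω : LinearMap.BilinForm ℝ V) (halt : ω.IsAlt)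
    (sharp : Module.Dual ℝ V →ₗ[ℝ] V)
    (hsharp : ∀ φ : Module.Dual ℝ V, ω (sharp φ) = φ)
    (hsharp' : ∀ X : V, sharp (ω X) = X)
    -- `ωF` is the symplectic form `ω`, viewed as a 2-form: `ι_X ωF = ω(X, ·) = X^♭`
    (ωF : Forms V) (hωF : ωF ∈ ⋀[ℝ]^2 (Module.Dual ℝ V))
    (hωFcontr : ∀ X : V, interiorV X ωF = ExteriorAlgebra.ι ℝ (ω X))
    (r : ℕ) (hr : r ≤ n) :
    Set.BijOn (fun x : Forms V => ωF ^ r * x)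
      (⋀[ℝ]^(n - r) (Module.Dual ℝ V) : Set (Forms V))
      (⋀[ℝ]^(n + r) (Module.Dual ℝ V) : Set (Forms V)) := by
  have hpair := isLefschetzPair_lefschetzDual halt hsharp hsharp' hωF hωFcontr
    (Module.finBasis ℝ V) (n := n) (by simp [hdim])
  have hmul : (fun x : Forms V => ωF ^ r * x) = ⇑(LinearMap.mulLeft ℝ ωF ^ r) := by
    rw [LinearMap.pow_mulLeft]
    rfl
  rw [hmul]
  refine LinearMap.bijOn_of_injOn_of_finrank_eq _ ?_ ?_ ?_
  · intro x hx
    simpa [show n - r + 2 * r = n + r by omega] using hpair.L_pow_mem hx r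
  · simpa [Nat.sub_sub_self hr] using hpair.injOn_L_pow (Nat.sub_le n r)
  · rw [exteriorPower.finrank_eq, exteriorPower.finrank_eq, Subspace.dual_finrank_eq, hdim]
    exact Nat.choose_symm_of_eq_add (by omega)

theorem hard_lefschetz_linear
    {V : Type*} [AddCommGroup V] [Module ℝ V] [FiniteDimensional ℝ V]
    (n : ℕ) (hdim : Module.finrank ℝ V = 2 * n)
    (ω : LinearMap.BilinForm ℝ V) (halt : ω.IsAlt) (hnd : ω.Nondegenerate)
    (sharp : Module.Dual ℝ V →ₗ[ℝ] V)
    (hsharp : ∀ φ : Module.Dual ℝ V, ω (sharp φ) = φ)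
    (hsharp' : ∀ X : V, sharp (ω X) = X)
    -- `ωF` is the symplectic form `ω`, viewed as a 2-form: `ι_X ωF = ω(X, ·) = X^♭`
    (ωF : Forms V) (hωF : ωF ∈ ⋀[ℝ]^2 (Module.Dual ℝ V))
    (hωFcontr : ∀ X : V, interiorV X ωF = ExteriorAlgebra.ι ℝ (ω X))
    (r : ℕ) (hr : r ≤ n) :
    Set.BijOn (fun x : Forms V => ωF ^ r * x)
      (⋀[ℝ]^(n - r) (Module.Dual ℝ V) : Set (Forms V))
      (⋀[ℝ]^(n + r) (Module.Dual ℝ V) : Set (Forms V)) :=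
  hard_lefschetz_linear_general n hdim ω halt sharp hsharp hsharp' ωF hωF hωFcontr r hr
end
end

section
/- Let (C, d) be a cochain complex of vector spaces graded by 0 ≤ r ≤ 2n, equipped with degree-preserving sl(2)-operators L (degree +2), Λ (degree −2), A = Σ(n−r)π_r, satisfying [Λ,L]=A, [A,L]=−2L, [A,Λ]=2Λ, [L,d]=0, and define δ := [d,Λ]. Then δ² = 0 and dδ + δd = 0. -/
/-!
Everything rests on `Λ` commuting with `δ`. With `h = -A`, the triple `(h, L, Λ)` is an
`sl₂`-triple, and `x = [Λ, δ]` is a primitive vector of weight `-3` for the adjoint action: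
`[L, x] = 0` because `[L, δ] = -d` and `[A, δ] = δ`. The vectors `(ad Λ)ᵏ x` have
`ad A`-eigenvalue `2k + 3`, while `A` acts on `Cʳ` by `n - r`, so `ad A` has no eigenvalue
beyond `2n` and `(ad Λ)ⁿ x = 0`. A primitive vector killed by a power of `ad Λ` has a natural
number as weight, which `-3` is not; hence `x = 0`. Then `d² = 0` and `[Λ, δ] = 0` give
`2 δ² = 0`.
-/

open Finset LieModule

section GradingProjections

variable {K R ι : Type*} [Field K] [Ring R] [Algebra K R] {π : ι → R} {s : Finset ι}

lemma eq_zero_of_forall_proj_mul_mul_eq_zero (hsum : ∑ i ∈ s, π i = 1) {T : R}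
    (hT : ∀ i ∈ s, ∀ j ∈ s, π i * T * π j = 0) : T = 0 := by
  rw [← one_mul T, ← mul_one (1 * T), ← hsum, sum_mul, sum_mul]
  refine sum_eq_zero fun i hi ↦ ?_
  rw [mul_sum]
  exact sum_eq_zero fun j hj ↦ hT i hi j hj

lemma proj_mul_sum_smul_proj (hortho : ∀ i j, i ≠ j → π i * π j = 0)
    (hidem : ∀ i, π i * π i = π i) (a : ι → K) {i : ι} (hi : i ∈ s) :
    π i * ∑ j ∈ s, a j • π j = a i • π i := by
  rw [mul_sum, sum_eq_single_of_mem i hi fun j _ hji ↦ by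
    rw [mul_smul_comm, hortho i j hji.symm, smul_zero], mul_smul_comm, hidem]

lemma sum_smul_proj_mul_proj (hortho : ∀ i j, i ≠ j → π i * π j = 0)
    (hidem : ∀ i, π i * π i = π i) (a : ι → K) {j : ι} (hj : j ∈ s) :
    (∑ i ∈ s, a i • π i) * π j = a j • π j := by
  rw [sum_mul, sum_eq_single_of_mem j hj fun i _ hij ↦ by
    rw [smul_mul_assoc, hortho i j hij, smul_zero], smul_mul_assoc, hidem]

lemma proj_mul_commutator_mul (hortho : ∀ i j, i ≠ j → π i * π j = 0)
    (hidem : ∀ i, π i * π i = π i) (a : ι → K) (T : R) {i j : ι} (hi : i ∈ s)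
    (hj : j ∈ s) :
    π i * ((∑ k ∈ s, a k • π k) * T - T * ∑ k ∈ s, a k • π k) * π j
      = (a i - a j) • (π i * T * π j) := by
  simp only [mul_sub, sub_mul, ← mul_assoc, proj_mul_sum_smul_proj hortho hidem a hi]
  simp only [mul_assoc, sum_smul_proj_mul_proj hortho hidem a hj, sub_smul, smul_mul_assoc,
    mul_smul_comm]

lemma eq_zero_of_commutator_eq_smul (hortho : ∀ i j, i ≠ j → π i * π j = 0)
    (hidem : ∀ i, π i * π i = π i) (hsum : ∑ i ∈ s, π i = 1) (a : ι → K) {c : K}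
    (hc : ∀ i ∈ s, ∀ j ∈ s, a i - a j ≠ c) {T : R}
    (hT : (∑ k ∈ s, a k • π k) * T - T * (∑ k ∈ s, a k • π k) = c • T) : T = 0 := by
  refine eq_zero_of_forall_proj_mul_mul_eq_zero hsum fun i hi j hj ↦ ?_
  have := proj_mul_commutator_mul hortho hidem a T hi hj
  rw [hT, mul_smul_comm, smul_mul_assoc, eq_comm, ← sub_eq_zero, ← sub_smul,
    smul_eq_zero] at this
  exact this.resolve_left (sub_ne_zero.mpr (hc i hi j hj))

lemma commutator_eq_smul_of_mul_proj [Add ι] (hortho : ∀ i j, i ≠ j → π i * π j = 0)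
    (hidem : ∀ i, π i * π i = π i) (hsum : ∑ i ∈ s, π i = 1) (a : ι → K) {k : ι}
    {c : K} (hak : ∀ j, a (j + k) - a j = c) {T : R}
    (hT : ∀ j, T * π j = π (j + k) * T * π j) :
    (∑ i ∈ s, a i • π i) * T - T * (∑ i ∈ s, a i • π i) = c • T := by
  rw [← sub_eq_zero]
  refine eq_zero_of_forall_proj_mul_mul_eq_zero hsum fun i hi j hj ↦ ?_
  rw [mul_sub, sub_mul, proj_mul_commutator_mul hortho hidem a T hi hj, mul_smul_comm,
    smul_mul_assoc, ← sub_smul, mul_assoc, hT, ← mul_assoc, ← mul_assoc]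
  obtain rfl | hij := eq_or_ne i (j + k)
  · rw [hak, sub_self, zero_smul]
  · rw [hortho i _ hij, zero_mul, zero_mul, smul_zero]

end GradingProjections

namespace IsSl2Triple.HasPrimitiveVectorWith

variable {R L M : Type*} [CommRing R] [LieRing L] [LieAlgebra R L] [AddCommGroup M] [Module R M]
  [LieRingModule L M] [LieModule R L M] {h e f : L} {t : IsSl2Triple h e f} {m : M} {μ : R}

lemma exists_nat_of_pow_toEnd_f_eq_zero [IsDomain R] [CharZero R] [Module.IsTorsionFree R M]
    (P : t.HasPrimitiveVectorWith m μ) {N : ℕ} (hN : (toEnd R L M f ^ N) m = 0) :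
    ∃ n : ℕ, μ = n := by
  obtain ⟨n, hn, hn₁⟩ := Nat.exists_not_and_succ_of_not_zero_of_exists
    (p := fun k ↦ (toEnd R L M f ^ k) m = 0) (by simpa using P.ne_zero) ⟨N, hN⟩
  refine ⟨n, ?_⟩
  have := P.lie_e_pow_succ_toEnd_f n
  rw [hn₁, lie_zero, eq_comm, smul_eq_zero_iff_left hn, mul_eq_zero, sub_eq_zero] at this
  exact this.resolve_left (Nat.cast_add_one_ne_zero n)

end IsSl2Triple.HasPrimitiveVectorWith

namespace IsSl2Triple

variable {R L : Type*} [CommRing R] [IsDomain R] [CharZero R] [LieRing L] [LieAlgebra R L]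
  [Module.IsTorsionFree R L] {h e f : L}

lemma lie_f_lie_lie_f_eq_zero (t : IsSl2Triple h e f) {d : L} (hed : ⁅e, d⁆ = 0)
    (hhd : ⁅h, d⁆ = d) {N : ℕ}
    (hspec : ∀ (x : L) (k : ℕ), N < k → ⁅h, x⁆ = -((k : R) • x) → x = 0) :
    ⁅f, ⁅d, f⁆⁆ = 0 := by
  by_contra hx
  have hhδ : ⁅h, ⁅d, f⁆⁆ = -⁅d, f⁆ := by
    rw [leibniz_lie, hhd, t.lie_lie_smul_f R, lie_neg, lie_smul, two_smul]; abel
  have P : t.HasPrimitiveVectorWith ⁅f, ⁅d, f⁆⁆ (-3 : R) := by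
    refine ⟨hx, ?_, ?_⟩
    · rw [leibniz_lie, hhδ, t.lie_lie_smul_f R, lie_neg, neg_lie, smul_lie]
      module
    · rw [leibniz_lie, t.lie_e_f, hhδ, leibniz_lie e d f, hed, zero_lie, zero_add, t.lie_e_f,
        ← lie_skew d h, hhd, lie_neg, ← lie_skew d f]
      abel
  obtain ⟨k, hk⟩ := P.exists_nat_of_pow_toEnd_f_eq_zero (N := N) <|
    hspec _ (2 * N + 3) (by omega) <| by
      rw [P.lie_h_pow_toEnd_f]; push_cast; module
  have : ((k + 3 : ℕ) : R) = 0 := by push_cast; rw [← hk]; ring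
  exact absurd (Nat.cast_eq_zero.mp this) (by omega)

end IsSl2Triple

section Associative

variable {K R : Type*} [Field K] [CharZero K] [Ring R] [Algebra K R]

lemma commutator_mul_self_eq_zero_of_sl2 {A L Λ d : R} (hd : d * d = 0)
    (hΛL : Λ * L - L * Λ = A) (hAL : A * L - L * A = (-2 : K) • L)
    (hAΛ : A * Λ - Λ * A = (2 : K) • Λ) (hLd : L * d - d * L = 0) (hAd : A * d - d * A = -d)
    {N : ℕ} (hspec : ∀ (x : R) (k : ℕ), N < k → A * x - x * A = (k : K) • x → x = 0) :
    (d * Λ - Λ * d) * (d * Λ - Λ * d) = 0 := by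
  let _ := LieRing.ofAssociativeRing (A := R)
  let _ := LieAlgebra.ofAssociativeAlgebra (R := K) (A := R)
  have hΛδ : Λ * (d * Λ - Λ * d) = (d * Λ - Λ * d) * Λ := by
    rcases eq_or_ne A 0 with rfl | hA
    · obtain rfl : Λ = 0 := by simpa using hAΛ.symm
      simp
    have t : IsSl2Triple (-A) L Λ :=
      { h_ne_zero := neg_ne_zero.mpr hA
        lie_e_f := by rw [Ring.lie_def, ← hΛL]; abel
        lie_h_e_nsmul := by
          rw [Ring.lie_def, neg_mul, mul_neg, ← ofNat_smul_eq_nsmul K]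
          linear_combination (norm := module) -hAL
        lie_h_f_nsmul := by
          rw [Ring.lie_def, neg_mul, mul_neg, ← ofNat_smul_eq_nsmul K]
          linear_combination (norm := module) -hAΛ }
    have := t.lie_f_lie_lie_f_eq_zero (R := K) (d := d) (N := N) (by rw [Ring.lie_def, hLd])
      (by rw [Ring.lie_def, neg_mul, mul_neg]; linear_combination (norm := module) -hAd)
      fun x k hk hx ↦ hspec x k hk <| by
        rw [Ring.lie_def, neg_mul, mul_neg] at hx
        linear_combination (norm := module) -hx
    rwa [Ring.lie_def, Ring.lie_def, sub_eq_zero] at this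
  have h2 : (2 : K) • ((d * Λ - Λ * d) * (d * Λ - Λ * d)) = 0 := by
    rw [two_smul]
    linear_combination (norm := noncomm_ring) d * hΛδ + hΛδ * d + hd * Λ * Λ + Λ * Λ * hd
      - 2 • (Λ * hd * Λ)
  exact (smul_eq_zero.mp h2).resolve_left two_ne_zero

end Associative

theorem delta_squared_zero_general
    {M : Type*} [AddCommGroup M] [Module ℝ M] (n : ℕ)
    -- grading of C = ⊕_{r=0}^{2n} C^r by projections π r onto degree r
    (π : ℕ → Module.End ℝ M)
    (hortho : ∀ r s, r ≠ s → π r * π s = 0)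
    (hidem : ∀ r, π r * π r = π r)
    (hsum : (∑ r ∈ Finset.range (2 * n + 1), π r) = 1)
    -- d, L, Λ of degrees +1, +2, −2 respectively
    (d L Λ : Module.End ℝ M)
    (hd2 : d * d = 0)
    (hddeg : ∀ r, d * π r = π (r + 1) * d * π r)
    -- the counting operator A = Σ (n − r) π_r
    (A : Module.End ℝ M)
    (hA : A = ∑ r ∈ Finset.range (2 * n + 1), ((n : ℝ) - r) • π r)
    -- sl(2) relations and [L, d] = 0
    (hΛL : Λ * L - L * Λ = A)
    (hAL : A * L - L * A = (-2 : ℝ) • L)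
    (hAΛ : A * Λ - Λ * A = (2 : ℝ) • Λ)
    (hLd : L * d - d * L = 0)
    -- δ := [d, Λ]
    (δ : Module.End ℝ M)
    (hδ : δ = d * Λ - Λ * d) :
    δ * δ = 0 ∧ d * δ + δ * d = 0 := by
  subst hδ
  have hAd : A * d - d * A = -d := by
    rw [hA, ← neg_one_smul ℝ d]
    exact commutator_eq_smul_of_mul_proj hortho hidem hsum _ (fun j ↦ by push_cast; ring) hddeg
  have hspec : ∀ (x : Module.End ℝ M) (k : ℕ), 2 * n < k →
      A * x - x * A = (k : ℝ) • x → x = 0 :=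
    fun x k hk hx ↦ eq_zero_of_commutator_eq_smul hortho hidem hsum _ (fun i _ j hj ↦ by
      have hjk : (j : ℝ) < k := by rw [mem_range] at hj; exact_mod_cast (by omega : j < k)
      linarith [(Nat.cast_nonneg i : (0 : ℝ) ≤ i)]) (hA ▸ hx)
  refine ⟨commutator_mul_self_eq_zero_of_sl2 hd2 hΛL hAL hAΛ hLd hAd hspec, ?_⟩
  linear_combination (norm := noncomm_ring) hd2 * Λ - Λ * hd2

theorem delta_squared_zero
    {M : Type*} [AddCommGroup M] [Module ℝ M] (n : ℕ)
    -- grading of C = ⊕_{r=0}^{2n} C^r by projections π r onto degree r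
    (π : ℕ → Module.End ℝ M)
    (hortho : ∀ r s, r ≠ s → π r * π s = 0)
    (hidem : ∀ r, π r * π r = π r)
    (hsupp : ∀ r, 2 * n < r → π r = 0)
    (hsum : (∑ r ∈ Finset.range (2 * n + 1), π r) = 1)
    -- d, L, Λ of degrees +1, +2, −2 respectively
    (d L Λ : Module.End ℝ M)
    (hd2 : d * d = 0)
    (hddeg : ∀ r, d * π r = π (r + 1) * d * π r)
    (hLdeg : ∀ r, L * π r = π (r + 2) * L * π r)
    (hΛdeg : ∀ r, Λ * π (r + 2) = π r * Λ * π (r + 2))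
    (hΛ0 : Λ * π 0 = 0) (hΛ1 : Λ * π 1 = 0)
    -- the counting operator A = Σ (n − r) π_r
    (A : Module.End ℝ M)
    (hA : A = ∑ r ∈ Finset.range (2 * n + 1), ((n : ℝ) - r) • π r)
    -- sl(2) relations and [L, d] = 0
    (hΛL : Λ * L - L * Λ = A)
    (hAL : A * L - L * A = (-2 : ℝ) • L)
    (hAΛ : A * Λ - Λ * A = (2 : ℝ) • Λ)
    (hLd : L * d - d * L = 0)
    -- δ := [d, Λ]
    (δ : Module.End ℝ M)
    (hδ : δ = d * Λ - Λ * d) :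
    δ * δ = 0 ∧ d * δ + δ * d = 0 :=
  delta_squared_zero_general n π hortho hidem hsum d L Λ hd2 hddeg A hA hΛL hAL hAΛ hLd δ hδ
end

section
/- Let (C, d, L, Λ, A) be as in the abstract symplectic Hodge setting (sl(2) operators commuting appropriately with d, δ = [d,Λ], [L,δ] = −d, [Λ,δ]=0). Define the harmonic space H^r = {φ ∈ C^r : dφ = 0, δφ = 0}. Then for every r ≤ n, L^r : H^{n−r} → H^{n+r} is an isomorphism, provided L^r : C^{n−r} → C^{n+r} is an isomorphism. -/
/-- Auxiliary scalar coefficient used in the sl(2) commutation identity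
`Λ^M (L^k Λ^k v) = gamAux M k a • Λ^M v`. -/
noncomputable def gamAux (M k : ℕ) (a : ℝ) : ℝ :=
  (∏ i ∈ Finset.range k, ((M : ℝ) - i)) * (∏ i ∈ Finset.range k, (a + M + 1 + i))

lemma gamAux_zero (k : ℕ) (a : ℝ) : gamAux 0 (k + 1) a = 0 := by
  unfold gamAux
  have h : (∏ i ∈ Finset.range (k + 1), (((0 : ℕ) : ℝ) - i)) = 0 := by
    apply Finset.prod_eq_zero (Finset.mem_range.mpr (Nat.succ_pos k))
    simp
  rw [h, zero_mul]

lemma gamAux_succ (M k : ℕ) (a : ℝ) :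
    gamAux (M + 1) (k + 1) a = (((M : ℝ) + 1) * (a + M + 2)) * gamAux M k (a + 2) := by
  unfold gamAux
  rw [Finset.prod_range_succ', Finset.prod_range_succ']
  have h1 : (∏ i ∈ Finset.range k, (((M + 1 : ℕ) : ℝ) - ((i + 1 : ℕ) : ℝ))) =
      ∏ i ∈ Finset.range k, ((M : ℝ) - i) := by
    apply Finset.prod_congr rfl
    intro i _
    push_cast
    ring
  have h2 : (∏ i ∈ Finset.range k, (a + ((M + 1 : ℕ) : ℝ) + 1 + ((i + 1 : ℕ) : ℝ))) =
      ∏ i ∈ Finset.range k, ((a + 2) + (M : ℝ) + 1 + i) := by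
    apply Finset.prod_congr rfl
    intro i _
    push_cast
    ring
  push_cast
  push_cast at h1 h2
  rw [h1, h2]
  ring

lemma gamAux_pos (M k : ℕ) (hk : k ≤ M) : 0 < gamAux M k (-(k : ℝ)) := by
  unfold gamAux
  apply mul_pos
  · apply Finset.prod_pos
    intro i hi
    have hik : i < k := Finset.mem_range.mp hi
    have h : (i : ℝ) < (M : ℝ) := by exact_mod_cast lt_of_lt_of_le hik hk
    linarith
  · apply Finset.prod_pos
    intro i hi
    have h1 : (k : ℝ) ≤ (M : ℝ) := by exact_mod_cast hk
    have h2 : (0 : ℝ) ≤ (i : ℝ) := Nat.cast_nonneg i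
    linarith

/- STATEMENT 16: in the abstract symplectic Hodge setting, with harmonic space
H^r = {φ ∈ C^r : dφ = 0, δφ = 0}, for every r ≤ n the map L^r : H^{n−r} → H^{n+r} is an
isomorphism, provided L^r : C^{n−r} → C^{n+r} is an isomorphism. -/
theorem hard_lefschetz_harmonic
    {M : Type*} [AddCommGroup M] [Module ℝ M] (n : ℕ)
    -- grading of C = ⊕_{r=0}^{2n} C^r by projections π r onto degree r
    (π : ℕ → Module.End ℝ M)
    (hortho : ∀ r s, r ≠ s → π r * π s = 0)
    (hidem : ∀ r, π r * π r = π r)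
    (hsupp : ∀ r, 2 * n < r → π r = 0)
    (hsum : (∑ r ∈ Finset.range (2 * n + 1), π r) = 1)
    -- d, L, Λ of degrees +1, +2, −2 respectively
    (d L Λ : Module.End ℝ M)
    (hd2 : d * d = 0)
    (hddeg : ∀ r, d * π r = π (r + 1) * d * π r)
    (hLdeg : ∀ r, L * π r = π (r + 2) * L * π r)
    (hΛdeg : ∀ r, Λ * π (r + 2) = π r * Λ * π (r + 2))
    (hΛ0 : Λ * π 0 = 0) (hΛ1 : Λ * π 1 = 0)
    -- the counting operator A = Σ (n − r) π_r
    (A : Module.End ℝ M)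
    (hA : A = ∑ r ∈ Finset.range (2 * n + 1), ((n : ℝ) - r) • π r)
    -- sl(2) relations and [L, d] = 0
    (hΛL : Λ * L - L * Λ = A)
    (hAL : A * L - L * A = (-2 : ℝ) • L)
    (hAΛ : A * Λ - Λ * A = (2 : ℝ) • Λ)
    (hLd : L * d - d * L = 0)
    -- δ := [d, Λ]
    (δ : Module.End ℝ M)
    (hδ : δ = d * Λ - Λ * d)
    (hδ2 : δ * δ = 0)
    (hLδ : L * δ - δ * L = -d)
    (hΛδ : Λ * δ - δ * Λ = 0)
    (r : ℕ) (hr : r ≤ n)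
    (hiso : Set.BijOn (⇑(L ^ r)) {x : M | π (n - r) x = x} {x : M | π (n + r) x = x}) :
    Set.BijOn (⇑(L ^ r))
      {x : M | π (n - r) x = x ∧ d x = 0 ∧ δ x = 0}
      {x : M | π (n + r) x = x ∧ d x = 0 ∧ δ x = 0} := by
  -- pointwise versions of the operator identities
  have hproj : ∀ m s x, π m x = x → s ≠ m → π s x = 0 := by
    intro m s x hx hs
    conv_lhs => rw [← hx]
    have h := congrArg (fun f : Module.End ℝ M => f x) (hortho s m hs)
    simpa using h
  have hAeig : ∀ m x, π m x = x → A x = ((n : ℝ) - m) • x := by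
    intro m x hx
    by_cases hm : m ≤ 2 * n
    · rw [hA, LinearMap.sum_apply, Finset.sum_eq_single m]
      · simp [hx]
      · intro b _ hb
        rw [LinearMap.smul_apply, hproj m b x hx hb, smul_zero]
      · intro hmem
        exact absurd (Finset.mem_range.mpr (by omega)) hmem
    · have h0 : x = 0 := by
        rw [← hx, hsupp m (by omega)]
        simp
      simp [h0]
  have hdegL : ∀ m x, π m x = x → π (m + 2) (L x) = L x := by
    intro m x hx
    have h := congrArg (fun f : Module.End ℝ M => f x) (hLdeg m)
    simp only [Module.End.mul_apply] at h
    rw [hx] at h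
    exact h.symm
  have hdegΛ : ∀ m x, π (m + 2) x = x → π m (Λ x) = Λ x := by
    intro m x hx
    have h := congrArg (fun f : Module.End ℝ M => f x) (hΛdeg m)
    simp only [Module.End.mul_apply] at h
    rw [hx] at h
    exact h.symm
  have hALp : ∀ x, A (L x) = L (A x) + (-2 : ℝ) • L x := by
    intro x
    have h := congrArg (fun f : Module.End ℝ M => f x) hAL
    simp only [LinearMap.sub_apply, Module.End.mul_apply, LinearMap.smul_apply] at h
    exact sub_eq_iff_eq_add'.mp h
  have hAΛp : ∀ x, A (Λ x) = Λ (A x) + (2 : ℝ) • Λ x := by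
    intro x
    have h := congrArg (fun f : Module.End ℝ M => f x) hAΛ
    simp only [LinearMap.sub_apply, Module.End.mul_apply, LinearMap.smul_apply] at h
    exact sub_eq_iff_eq_add'.mp h
  have hΛLp : ∀ x, Λ (L x) = L (Λ x) + A x := by
    intro x
    have h := congrArg (fun f : Module.End ℝ M => f x) hΛL
    simp only [LinearMap.sub_apply, Module.End.mul_apply] at h
    exact sub_eq_iff_eq_add'.mp h
  have hdLp : ∀ x, d (L x) = L (d x) := by
    intro x
    have h := congrArg (fun f : Module.End ℝ M => f x) hLd
    simp only [LinearMap.sub_apply, Module.End.mul_apply, LinearMap.zero_apply] at h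
    exact (sub_eq_zero.mp h).symm
  have hδLp : ∀ x, δ (L x) = L (δ x) + d x := by
    intro x
    have h := congrArg (fun f : Module.End ℝ M => f x) hLδ
    simp only [LinearMap.sub_apply, Module.End.mul_apply, LinearMap.neg_apply] at h
    -- h : L (δ x) - δ (L x) = -(d x)
    have h2 := sub_eq_iff_eq_add.mp h
    rw [h2]
    abel
  have hδΛp : ∀ x, δ (Λ x) = Λ (δ x) := by
    intro x
    have h := congrArg (fun f : Module.End ℝ M => f x) hΛδ
    simp only [LinearMap.sub_apply, Module.End.mul_apply, LinearMap.zero_apply] at h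
    exact (sub_eq_zero.mp h).symm
  have hdΛp : ∀ x, d (Λ x) = δ x + Λ (d x) := by
    intro x
    have h := congrArg (fun f : Module.End ℝ M => f x) hδ
    simp only [LinearMap.sub_apply, Module.End.mul_apply] at h
    rw [h]
    abel
  -- eigenvalue propagation
  have hALpow : ∀ (k : ℕ) (c : ℝ) (x : M), A x = c • x → A ((L ^ k) x) = (c - 2 * (k : ℝ)) • (L ^ k) x := by
    intro k
    induction k with
    | zero => intro c x h; simpa using h
    | succ k ihk =>
      intro c x h
      have e1 : (L ^ (k + 1)) x = L ((L ^ k) x) := by rw [pow_succ' L k]; rfl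
      rw [e1, hALp, ihk c x h, map_smul, ← add_smul]
      congr 1
      push_cast
      ring
  have hAΛpow : ∀ (k : ℕ) (c : ℝ) (x : M), A x = c • x → A ((Λ ^ k) x) = (c + 2 * (k : ℝ)) • (Λ ^ k) x := by
    intro k
    induction k with
    | zero => intro c x h; simpa using h
    | succ k ihk =>
      intro c x h
      have e1 : (Λ ^ (k + 1)) x = Λ ((Λ ^ k) x) := by rw [pow_succ' Λ k]; rfl
      rw [e1, hAΛp, ihk c x h, map_smul, ← add_smul]
      congr 1
      push_cast
      ring
  -- the swap identity  Λ^{t+1} (L u) = L (Λ^{t+1} u) + (t+1)(c+t) Λ^t u  on A-eigenvectors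
  have hswap : ∀ (t : ℕ) (c : ℝ) (u : M), A u = c • u →
      (Λ ^ (t + 1)) (L u) = L ((Λ ^ (t + 1)) u) + (((t : ℝ) + 1) * (c + (t : ℝ))) • (Λ ^ t) u := by
    intro t
    induction t with
    | zero =>
      intro c u hu
      simp only [zero_add, pow_one, pow_zero, Module.End.one_apply, Nat.cast_zero]
      rw [hΛLp u, hu]
      norm_num
    | succ t iht =>
      intro c u hu
      have e1 : (Λ ^ (t + 1 + 1)) (L u) = Λ ((Λ ^ (t + 1)) (L u)) := by
        rw [pow_succ' Λ (t + 1)]; rfl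
      have e2 : (Λ ^ (t + 1 + 1)) u = Λ ((Λ ^ (t + 1)) u) := by
        rw [pow_succ' Λ (t + 1)]; rfl
      have e3 : (Λ ^ (t + 1)) u = Λ ((Λ ^ t) u) := by
        rw [pow_succ' Λ t]; rfl
      have hA1 : A ((Λ ^ (t + 1)) u) = (c + 2 * ((t : ℝ) + 1)) • (Λ ^ (t + 1)) u := by
        have h := hAΛpow (t + 1) c u hu
        rwa [show ((t + 1 : ℕ) : ℝ) = (t : ℝ) + 1 by push_cast; ring] at h
      rw [e1, iht c u hu, map_add, map_smul, hΛLp ((Λ ^ (t + 1)) u), hA1, ← e2, ← e3]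
      rw [add_assoc, ← add_smul]
      congr 1
      push_cast
      ring
  -- the key identity  Λ^M (L^k Λ^k v) = gamAux M k a • Λ^M v
  have hGAM : ∀ (k Mi : ℕ) (a : ℝ) (v : M), A v = a • v → (Λ ^ (Mi + 1)) v = 0 →
      (Λ ^ Mi) ((L ^ k) ((Λ ^ k) v)) = gamAux Mi k a • (Λ ^ Mi) v := by
    intro k
    induction k with
    | zero =>
      intro Mi a v _ _
      simp [gamAux]
    | succ k ihk =>
      intro Mi a v hv h0
      rcases Mi with _ | M'
      · -- Mi = 0 : both sides vanish
        have hΛv : Λ v = 0 := by simpa [pow_one] using h0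
        have h1 : (Λ ^ (k + 1)) v = 0 := by
          have e : (Λ ^ (k + 1)) v = (Λ ^ k) (Λ v) := by rw [pow_succ Λ k]; rfl
          rw [e, hΛv, map_zero]
        simp [h1, gamAux_zero]
      · -- Mi = M' + 1
        have hw : A (Λ v) = (a + 2) • Λ v := by
          rw [hAΛp v, hv, map_smul, ← add_smul]
        have hw0' : (Λ ^ (M' + 1)) (Λ v) = 0 := by
          have e : (Λ ^ (M' + 2)) v = (Λ ^ (M' + 1)) (Λ v) := by rw [pow_succ Λ (M' + 1)]; rfl
          rw [← e]
          exact h0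
        have hw0 : (Λ ^ (M' + 1 + 1)) (Λ v) = 0 := by
          have e : (Λ ^ (M' + 2)) (Λ v) = Λ ((Λ ^ (M' + 1)) (Λ v)) := by
            rw [pow_succ' Λ (M' + 1)]; rfl
          rw [e, hw0', map_zero]
        have hu : A ((L ^ k) ((Λ ^ k) (Λ v))) = (a + 2) • (L ^ k) ((Λ ^ k) (Λ v)) := by
          have h2 := hAΛpow k (a + 2) (Λ v) hw
          have h3 := hALpow k ((a + 2) + 2 * k) ((Λ ^ k) (Λ v)) h2
          rwa [show ((a + 2) + 2 * (k : ℝ)) - 2 * (k : ℝ) = a + 2 by ring] at h3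
        have hexp : (L ^ (k + 1)) ((Λ ^ (k + 1)) v) = L ((L ^ k) ((Λ ^ k) (Λ v))) := by
          have e1 : (Λ ^ (k + 1)) v = (Λ ^ k) (Λ v) := by rw [pow_succ Λ k]; rfl
          have e2 : (L ^ (k + 1)) ((Λ ^ k) (Λ v)) = L ((L ^ k) ((Λ ^ k) (Λ v))) := by
            rw [pow_succ' L k]; rfl
          rw [e1, e2]
        rw [hexp, hswap M' (a + 2) _ hu]
        have hu1 : (Λ ^ (M' + 1)) ((L ^ k) ((Λ ^ k) (Λ v))) = 0 := by
          rw [ihk (M' + 1) (a + 2) (Λ v) hw hw0, hw0', smul_zero]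
        have hu2 : (Λ ^ M') ((L ^ k) ((Λ ^ k) (Λ v))) = gamAux M' k (a + 2) • (Λ ^ M') (Λ v) :=
          ihk M' (a + 2) (Λ v) hw hw0'
        have e3 : (Λ ^ M') (Λ v) = (Λ ^ (M' + 1)) v := by rw [pow_succ Λ M']; rfl
        rw [hu1, hu2, e3, map_zero, zero_add, smul_smul, gamAux_succ]
        congr 1
        push_cast
        ring
  -- local nilpotency of Λ
  have hΛnil : ∀ m, ∀ x, π m x = x → (Λ ^ (m + 1)) x = 0 := by
    intro m
    induction m using Nat.strong_induction_on with
    | _ m ih =>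
      intro x hx
      rcases m with _ | m1
      · have h1 : Λ x = 0 := by
          conv_lhs => rw [← hx]
          have h := congrArg (fun f : Module.End ℝ M => f x) hΛ0
          simpa using h
        simpa [pow_one] using h1
      · rcases m1 with _ | m'
        · have h1 : Λ x = 0 := by
            conv_lhs => rw [← hx]
            have h := congrArg (fun f : Module.End ℝ M => f x) hΛ1
            simpa using h
          show (Λ ^ 2) x = 0
          have e : (Λ ^ 2) x = Λ (Λ x) := by rw [pow_two]; rfl
          rw [e, h1, map_zero]
        · have h1 : π m' (Λ x) = Λ x := hdegΛ m' x hx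
          have h2 : (Λ ^ (m' + 1)) (Λ x) = 0 := ih m' (by omega) (Λ x) h1
          show (Λ ^ (m' + 3)) x = 0
          have e1 : (Λ ^ (m' + 3)) x = (Λ ^ (m' + 2)) (Λ x) := by rw [pow_succ Λ (m' + 2)]; rfl
          have e2 : (Λ ^ (m' + 2)) (Λ x) = Λ ((Λ ^ (m' + 1)) (Λ x)) := by
            rw [pow_succ' Λ (m' + 1)]; rfl
          rw [e1, e2, h2, map_zero]
  -- no negative "eigenvalues" for L ∘ Λ in degrees ≤ n
  have hnoeig : ∀ (m : ℕ) (w : M) (a : ℝ), m ≤ n → π m w = w → L (Λ w) = -(a • w) → 0 < a → w = 0 := by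
    intro m w a hmn hw hLw ha
    have hb : A w = ((n : ℝ) - m) • w := hAeig m w hw
    have hb0 : (0 : ℝ) ≤ (n : ℝ) - m := by
      have h : (m : ℝ) ≤ (n : ℝ) := by exact_mod_cast hmn
      linarith
    have hAu : A (Λ w) = (((n : ℝ) - m) + 2) • Λ w := by
      rw [hAΛp w, hb, map_smul, ← add_smul]
    have desc : ∀ t, (Λ ^ (t + 1)) w = 0 → (Λ ^ t) w = 0 := by
      intro t
      rcases t with _ | t'
      · intro h1
        have h2 : Λ w = 0 := by simpa [pow_one] using h1
        have h4 : a • w = 0 := by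
          have h3 : (0 : M) = -(a • w) := by rw [← hLw, h2, map_zero]
          have h3' := h3.symm
          rwa [neg_eq_zero] at h3'
        have h5 : w = 0 := by
          rcases smul_eq_zero.mp h4 with h | h
          · exact absurd h ha.ne'
          · exact h
        simpa using h5
      · intro h1
        -- h1 : Λ^{t'+2} w = 0 ; goal : Λ^{t'+1} w = 0
        have hs := hswap t' (((n : ℝ) - m) + 2) (Λ w) hAu
        rw [hLw] at hs
        have e1 : (Λ ^ (t' + 1)) (Λ w) = (Λ ^ (t' + 2)) w := by rw [pow_succ Λ (t' + 1)]; rfl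
        have e2 : (Λ ^ t') (Λ w) = (Λ ^ (t' + 1)) w := by rw [pow_succ Λ t']; rfl
        rw [e1, e2, h1, map_zero, zero_add] at hs
        have e3 : (Λ ^ (t' + 1)) (-(a • w)) = -(a • (Λ ^ (t' + 1)) w) := by
          rw [map_neg, map_smul]
        rw [e3] at hs
        -- hs : -(a • z) = c • z
        have h5 : a • ((Λ ^ (t' + 1)) w) =
            -((((t' : ℝ) + 1) * ((((n : ℝ) - m) + 2) + t')) • ((Λ ^ (t' + 1)) w)) :=
          neg_eq_iff_eq_neg.mp hs
        have hz : (a + ((t' : ℝ) + 1) * ((((n : ℝ) - m) + 2) + t')) • ((Λ ^ (t' + 1)) w) = 0 := by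
          rw [add_smul, h5]
          abel
        have hcpos : 0 < a + ((t' : ℝ) + 1) * ((((n : ℝ) - m) + 2) + t') := by
          have h6 : (0 : ℝ) ≤ (t' : ℝ) := Nat.cast_nonneg t'
          nlinarith
        rcases smul_eq_zero.mp hz with h | h
        · exact absurd h hcpos.ne'
        · exact h
    have hall : ∀ t, (Λ ^ t) w = 0 → w = 0 := by
      intro t
      induction t with
      | zero => intro h; simpa using h
      | succ t iht => intro h; exact iht (desc t h)
    exact hall (m + 1) (hΛnil m w hw)
  -- degree bookkeeping for powers
  have hdegLpow : ∀ k m x, π m x = x → π (m + 2 * k) ((L ^ k) x) = (L ^ k) x := by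
    intro k
    induction k with
    | zero => intro m x hx; simpa using hx
    | succ k ihk =>
      intro m x hx
      have h1 := hdegL (m + 2 * k) ((L ^ k) x) (ihk m x hx)
      have e : (L ^ (k + 1)) x = L ((L ^ k) x) := by rw [pow_succ' L k]; rfl
      rw [e, show m + 2 * (k + 1) = m + 2 * k + 2 by ring]
      exact h1
  have hdegΛpow : ∀ k m x, π (m + 2 * k) x = x → π m ((Λ ^ k) x) = (Λ ^ k) x := by
    intro k
    induction k with
    | zero => intro m x hx; simpa using hx
    | succ k ihk =>
      intro m x hx
      have h1 : π (m + 2 * k) (Λ x) = Λ x := by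
        apply hdegΛ (m + 2 * k) x
        rw [show m + 2 * k + 2 = m + 2 * (k + 1) by ring]
        exact hx
      have h2 := ihk m (Λ x) h1
      have e : (Λ ^ (k + 1)) x = (Λ ^ k) (Λ x) := by rw [pow_succ Λ k]; rfl
      rw [e]
      exact h2
  -- harmonicity is preserved by L, Λ and their powers
  have hharmLpow : ∀ k x, d x = 0 → δ x = 0 → d ((L ^ k) x) = 0 ∧ δ ((L ^ k) x) = 0 := by
    intro k
    induction k with
    | zero => intro x h1 h2; simpa using ⟨h1, h2⟩
    | succ k ihk =>
      intro x h1 h2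
      obtain ⟨h3, h4⟩ := ihk x h1 h2
      have e : (L ^ (k + 1)) x = L ((L ^ k) x) := by rw [pow_succ' L k]; rfl
      constructor
      · rw [e, hdLp, h3, map_zero]
      · rw [e, hδLp, h4, h3, map_zero, add_zero]
  have hharmΛpow : ∀ k x, d x = 0 → δ x = 0 → d ((Λ ^ k) x) = 0 ∧ δ ((Λ ^ k) x) = 0 := by
    intro k
    induction k with
    | zero => intro x h1 h2; simpa using ⟨h1, h2⟩
    | succ k ihk =>
      intro x h1 h2
      have h3 : d (Λ x) = 0 := by rw [hdΛp, h2, h1, map_zero, add_zero]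
      have h4 : δ (Λ x) = 0 := by rw [hδΛp, h2, map_zero]
      have e : (Λ ^ (k + 1)) x = (Λ ^ k) (Λ x) := by rw [pow_succ Λ k]; rfl
      rw [e]
      exact ihk (Λ x) h3 h4
  -- injectivity of Λ^r on degree n + r (uses surjectivity of L^r : C^{n-r} → C^{n+r})
  have hinjΛ : ∀ y, π (n + r) y = y → (Λ ^ r) y = 0 → y = 0 := by
    intro y hy hΛry
    obtain ⟨z, hz, hzy⟩ := hiso.2.2 hy
    have hzdeg : π (n - r) z = z := hz
    have hAz : A z = (r : ℝ) • z := by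
      rw [hAeig (n - r) z hzdeg]
      congr 1
      rw [Nat.cast_sub hr]
      ring
    suffices hzz : z = 0 by
      rw [← hzy, hzz, map_zero]
    have key : ∀ j, j ≤ r → (Λ ^ j) ((L ^ j) z) = 0 → z = 0 := by
      intro j
      induction j with
      | zero => intro _ h; simpa using h
      | succ j ihj =>
        intro hjr h
        have hAu : A ((L ^ j) z) = ((r : ℝ) - 2 * j) • (L ^ j) z := hALpow j (r : ℝ) z hAz
        have hs := hswap j ((r : ℝ) - 2 * j) ((L ^ j) z) hAu
        have e1 : (L ^ (j + 1)) z = L ((L ^ j) z) := by rw [pow_succ' L j]; rfl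
        rw [← e1, h] at hs
        have e2 : (Λ ^ (j + 1)) ((L ^ j) z) = Λ ((Λ ^ j) ((L ^ j) z)) := by
          rw [pow_succ' Λ j]; rfl
        rw [e2] at hs
        -- hs : 0 = L (Λ Ej) + c • Ej
        have hLE : L (Λ ((Λ ^ j) ((L ^ j) z))) =
            -((((j : ℝ) + 1) * (((r : ℝ) - 2 * j) + j)) • ((Λ ^ j) ((L ^ j) z))) := by
          have h7 : L (Λ ((Λ ^ j) ((L ^ j) z))) +
              (((j : ℝ) + 1) * (((r : ℝ) - 2 * j) + j)) • ((Λ ^ j) ((L ^ j) z)) = 0 := hs.symm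
          exact eq_neg_of_add_eq_zero_left h7
        have hdegE : π (n - r) ((Λ ^ j) ((L ^ j) z)) = (Λ ^ j) ((L ^ j) z) := by
          apply hdegΛpow j (n - r) ((L ^ j) z)
          exact hdegLpow j (n - r) z hzdeg
        have hcpos : (0 : ℝ) < ((j : ℝ) + 1) * (((r : ℝ) - 2 * j) + j) := by
          have hjr' : (j : ℝ) + 1 ≤ (r : ℝ) := by exact_mod_cast hjr
          have hj0 : (0 : ℝ) ≤ (j : ℝ) := Nat.cast_nonneg j
          nlinarith
        have hE0 : (Λ ^ j) ((L ^ j) z) = 0 :=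
          hnoeig (n - r) ((Λ ^ j) ((L ^ j) z)) _ (by omega) hdegE hLE hcpos
        exact ihj (by omega) hE0
    apply key r le_rfl
    rw [hzy]
    exact hΛry
  -- surjectivity onto harmonic elements, by induction on the Λ-nilpotency index
  have hSURJ : ∀ N y, π (n + r) y = y → d y = 0 → δ y = 0 → (Λ ^ N) y = 0 →
      ∃ x, (π (n - r) x = x ∧ d x = 0 ∧ δ x = 0) ∧ (L ^ r) x = y := by
    intro N
    induction N using Nat.strong_induction_on with
    | _ N ih =>
      intro y hdeg hdy hδy hN
      by_cases hNr : N ≤ r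
      · have hΛry : (Λ ^ r) y = 0 := by
          have e : Λ ^ r = Λ ^ (r - N) * Λ ^ N := by
            rw [← pow_add]
            congr 1
            omega
          rw [e, Module.End.mul_apply, hN, map_zero]
        have hy0 : y = 0 := hinjΛ y hdeg hΛry
        refine ⟨0, ⟨by simp, by simp, by simp⟩, by simp [hy0]⟩
      · push_neg at hNr
        obtain ⟨Mi, rfl⟩ : ∃ Mi, N = Mi + 1 := ⟨N - 1, by omega⟩
        have hrM : r ≤ Mi := by omega
        have hAy : A y = (-(r : ℝ)) • y := by
          rw [hAeig (n + r) y hdeg]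
          congr 1
          push_cast
          ring
        have hγpos : 0 < gamAux Mi r (-(r : ℝ)) := gamAux_pos Mi r hrM
        have hw := hharmΛpow r y hdy hδy
        have hwdeg : π (n - r) ((Λ ^ r) y) = (Λ ^ r) y := by
          apply hdegΛpow r (n - r) y
          rw [show n - r + 2 * r = n + r by omega]
          exact hdeg
        have hLw := hharmLpow r ((Λ ^ r) y) hw.1 hw.2
        have hLwdeg : π (n + r) ((L ^ r) ((Λ ^ r) y)) = (L ^ r) ((Λ ^ r) y) := by
          have h1 := hdegLpow r (n - r) ((Λ ^ r) y) hwdeg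
          rwa [show n - r + 2 * r = n + r by omega] at h1
        have hy'deg : π (n + r) (y - (gamAux Mi r (-(r : ℝ)))⁻¹ • (L ^ r) ((Λ ^ r) y)) =
            y - (gamAux Mi r (-(r : ℝ)))⁻¹ • (L ^ r) ((Λ ^ r) y) := by
          rw [map_sub, map_smul, hdeg, hLwdeg]
        have hy'd : d (y - (gamAux Mi r (-(r : ℝ)))⁻¹ • (L ^ r) ((Λ ^ r) y)) = 0 := by
          rw [map_sub, map_smul, hdy, hLw.1, smul_zero, sub_zero]
        have hy'δ : δ (y - (gamAux Mi r (-(r : ℝ)))⁻¹ • (L ^ r) ((Λ ^ r) y)) = 0 := by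
          rw [map_sub, map_smul, hδy, hLw.2, smul_zero, sub_zero]
        have hy'Λ : (Λ ^ Mi) (y - (gamAux Mi r (-(r : ℝ)))⁻¹ • (L ^ r) ((Λ ^ r) y)) = 0 := by
          rw [map_sub, map_smul, hGAM r Mi (-(r : ℝ)) y hAy hN, smul_smul,
            inv_mul_cancel₀ hγpos.ne', one_smul, sub_self]
        obtain ⟨x', hx', hLx'⟩ := ih Mi (by omega) _ hy'deg hy'd hy'δ hy'Λ
        refine ⟨x' + (gamAux Mi r (-(r : ℝ)))⁻¹ • (Λ ^ r) y, ⟨?_, ?_, ?_⟩, ?_⟩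
        · rw [map_add, map_smul, hx'.1, hwdeg]
        · rw [map_add, map_smul, hx'.2.1, hw.1, smul_zero, add_zero]
        · rw [map_add, map_smul, hx'.2.2, hw.2, smul_zero, add_zero]
        · rw [map_add, map_smul, hLx']
          abel
  -- assemble the bijection
  refine ⟨?_, ?_, ?_⟩
  · intro x hx
    obtain ⟨hxdeg, hxd, hxδ⟩ := hx
    refine ⟨?_, (hharmLpow r x hxd hxδ).1, (hharmLpow r x hxd hxδ).2⟩
    have h1 := hdegLpow r (n - r) x hxdeg
    rwa [show n - r + 2 * r = n + r by omega] at h1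
  · exact hiso.2.1.mono (fun x hx => hx.1)
  · intro y hy
    obtain ⟨hydeg, hyd, hyδ⟩ := hy
    obtain ⟨x, hx, hLx⟩ := hSURJ (n + r + 1) y hydeg hyd hyδ (hΛnil (n + r) y hydeg)
    exact ⟨x, hx, hLx⟩
end

section
/- (Abstract Mathieu theorem.) Let (C, d, L, Λ, A) satisfy: d²=0, [L,d]=0, δ := [d,Λ] with [L,δ]=−d, [Λ,δ]=0, sl(2) relations [Λ,L]=A, [A,L]=−2L, [A,Λ]=2Λ, and L^{r} : C^{n−r} → C^{n+r} an isomorphism for all r ≤ n. Then the following are equivalent: (1) every cohomology class of H^r(C,d) contains a representative φ with dφ = δφ = 0; (2) for every r ≤ n, the induced map L^r : H^{n−r}(C,d) → H^{n+r}(C,d) on cohomology is surjective. -/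
open Finset

section AM
variable {M : Type*} [AddCommGroup M] [Module ℝ M]

lemma am_assoc4 (a b c e : Module.End ℝ M) : a * (b * c * e) = (a * b) * (c * e) := by
  noncomm_ring

-- generic shift lemma for degree +k operators
lemma am_shift_up (n : ℕ) (π : ℕ → Module.End ℝ M)
    (hortho : ∀ r s, r ≠ s → π r * π s = 0)
    (hidem : ∀ r, π r * π r = π r)
    (hsupp : ∀ r, 2 * n < r → π r = 0)
    (hsum : (∑ r ∈ Finset.range (2 * n + 1), π r) = 1)
    (T : Module.End ℝ M) (k : ℕ)
    (hT : ∀ r, T * π r = π (r + k) * T * π r) :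
    ∀ r, π (r + k) * T = T * π r := by
  intro r
  have hTdec : ∀ u : ℕ, π u * T = ∑ s ∈ Finset.range (2 * n + 1), π u * (π (s + k) * T * π s) := by
    intro u
    calc π u * T = π u * (T * 1) := by rw [mul_one]
    _ = ∑ s ∈ Finset.range (2 * n + 1), π u * (T * π s) := by
        rw [← hsum, Finset.mul_sum, Finset.mul_sum]
    _ = ∑ s ∈ Finset.range (2 * n + 1), π u * (π (s + k) * T * π s) := by
        refine Finset.sum_congr rfl fun s _ => by rw [hT s]
  by_cases hr : r < 2 * n + 1
  · calc π (r + k) * T = ∑ s ∈ Finset.range (2 * n + 1), π (r+k) * (π (s + k) * T * π s) :=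
        hTdec _
    _ = π (r + k) * (π (r + k) * T * π r) := by
        refine Finset.sum_eq_single r (fun s _ hs => ?_) (fun h => absurd (Finset.mem_range.2 hr) h)
        rw [am_assoc4, hortho _ _ (show r + k ≠ s + k by omega), zero_mul]
    _ = T * π r := by rw [am_assoc4, hidem, ← mul_assoc, ← hT]
  · have hr' : 2 * n < r := by omega
    have h1 : π r = 0 := hsupp r hr'
    calc π (r + k) * T = ∑ s ∈ Finset.range (2 * n + 1), π (r+k) * (π (s + k) * T * π s) :=
        hTdec _
    _ = 0 := by
        refine Finset.sum_eq_zero fun s hs => ?_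
        have hs' : s < 2*n+1 := Finset.mem_range.1 hs
        rw [am_assoc4, hortho _ _ (show r + k ≠ s + k by omega), zero_mul]
    _ = T * π r := by rw [h1, mul_zero]

-- shift lemma for Λ (degree −2)
lemma am_shift_down (n : ℕ) (π : ℕ → Module.End ℝ M)
    (hortho : ∀ r s, r ≠ s → π r * π s = 0)
    (hidem : ∀ r, π r * π r = π r)
    (hsupp : ∀ r, 2 * n < r → π r = 0)
    (hsum : (∑ r ∈ Finset.range (2 * n + 1), π r) = 1)
    (Λ : Module.End ℝ M)
    (hΛdeg : ∀ r, Λ * π (r + 2) = π r * Λ * π (r + 2))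
    (hΛ0 : Λ * π 0 = 0) (hΛ1 : Λ * π 1 = 0) :
    ∀ r, π r * Λ = Λ * π (r + 2) := by
  intro r
  have key : ∀ s, π r * (Λ * π s) = if s = r + 2 then Λ * π (r+2) else 0 := by
    intro s
    match s, hΛ0, hΛ1 with
    | 0, h0, _ => rw [h0, mul_zero]; simp
    | 1, _, h1 => rw [h1, mul_zero]; simp
    | (t+2), _, _ =>
      rw [hΛdeg t]
      simp only [← mul_assoc]
      by_cases ht : r = t
      · subst ht; rw [if_pos rfl, hidem, ← hΛdeg]
      · rw [hortho _ _ ht, zero_mul, zero_mul, if_neg (by omega)]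
  by_cases hr : r + 2 < 2 * n + 1
  · calc π r * Λ = π r * (Λ * 1) := by rw [mul_one]
    _ = ∑ s ∈ Finset.range (2 * n + 1), π r * (Λ * π s) := by
        rw [← hsum, Finset.mul_sum, Finset.mul_sum]
    _ = Λ * π (r + 2) := by
        rw [Finset.sum_congr rfl fun s _ => key s]
        rw [Finset.sum_ite_eq' (Finset.range (2*n+1)) (r+2) (fun _ => Λ * π (r+2))]
        rw [if_pos (Finset.mem_range.2 hr)]
  · have h1 : π (r+2) = 0 := hsupp _ (by omega)
    calc π r * Λ = π r * (Λ * 1) := by rw [mul_one]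
    _ = ∑ s ∈ Finset.range (2 * n + 1), π r * (Λ * π s) := by
        rw [← hsum, Finset.mul_sum, Finset.mul_sum]
    _ = 0 := by
        refine Finset.sum_eq_zero fun s hs => ?_
        rw [key s, if_neg (by have := Finset.mem_range.1 hs; omega)]
    _ = Λ * π (r + 2) := by rw [h1, mul_zero]

end AM


/- STATEMENT 17 (abstract Mathieu theorem): in the abstract symplectic Hodge setting,
with L^r : C^{n−r} → C^{n+r} an isomorphism for all r ≤ n, the following are equivalent:
(1) every cohomology class of H^r(C,d) has a representative φ with dφ = δφ = 0;
(2) for every r ≤ n, the induced map L^r : H^{n−r}(C,d) → H^{n+r}(C,d) is surjective. -/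
theorem abstract_mathieu
    {M : Type*} [AddCommGroup M] [Module ℝ M] (n : ℕ)
    -- grading of C = ⊕_{r=0}^{2n} C^r by projections π r onto degree r
    (π : ℕ → Module.End ℝ M)
    (hortho : ∀ r s, r ≠ s → π r * π s = 0)
    (hidem : ∀ r, π r * π r = π r)
    (hsupp : ∀ r, 2 * n < r → π r = 0)
    (hsum : (∑ r ∈ Finset.range (2 * n + 1), π r) = 1)
    -- d, L, Λ of degrees +1, +2, −2 respectively
    (d L Λ : Module.End ℝ M)
    (hd2 : d * d = 0)
    (hddeg : ∀ r, d * π r = π (r + 1) * d * π r)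
    (hLdeg : ∀ r, L * π r = π (r + 2) * L * π r)
    (hΛdeg : ∀ r, Λ * π (r + 2) = π r * Λ * π (r + 2))
    (hΛ0 : Λ * π 0 = 0) (hΛ1 : Λ * π 1 = 0)
    -- the counting operator A = Σ (n − r) π_r
    (A : Module.End ℝ M)
    (hA : A = ∑ r ∈ Finset.range (2 * n + 1), ((n : ℝ) - r) • π r)
    -- sl(2) relations and [L, d] = 0
    (hΛL : Λ * L - L * Λ = A)
    (hAL : A * L - L * A = (-2 : ℝ) • L)
    (hAΛ : A * Λ - Λ * A = (2 : ℝ) • Λ)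
    (hLd : L * d - d * L = 0)
    -- δ := [d, Λ]
    (δ : Module.End ℝ M)
    (hδ : δ = d * Λ - Λ * d)
    (hδ2 : δ * δ = 0)
    (hLδ : L * δ - δ * L = -d)
    (hΛδ : Λ * δ - δ * Λ = 0)
    (hiso : ∀ r ≤ n,
      Set.BijOn (⇑(L ^ r)) {x : M | π (n - r) x = x} {x : M | π (n + r) x = x}) :
    ((∀ (r : ℕ) (x : M), π r x = x → d x = 0 →
        ∃ y : M, π r y = y ∧ d y = 0 ∧ δ y = 0 ∧ ∃ z : M, x - y = d z)
      ↔ (∀ r ≤ n, ∀ x : M, π (n + r) x = x → d x = 0 →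
          ∃ y : M, π (n - r) y = y ∧ d y = 0 ∧ ∃ z : M, x - (L ^ r) y = d z)) := by
  -- operator-level degree shifts
  have hπd : ∀ r, π (r + 1) * d = d * π r :=
    am_shift_up n π hortho hidem hsupp hsum d 1 hddeg
  have hπL : ∀ r, π (r + 2) * L = L * π r :=
    am_shift_up n π hortho hidem hsupp hsum L 2 hLdeg
  have hπΛ : ∀ r, π r * Λ = Λ * π (r + 2) :=
    am_shift_down n π hortho hidem hsupp hsum Λ hΛdeg hΛ0 hΛ1
  -- elementwise degree shifts
  have memd : ∀ r (x : M), π r x = x → π (r + 1) (d x) = d x := by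
    intro r x hx
    have h := congrArg (fun T : Module.End ℝ M => T x) (hπd r)
    simpa [Module.End.mul_apply, hx] using h
  have memL : ∀ r (x : M), π r x = x → π (r + 2) (L x) = L x := by
    intro r x hx
    have h := congrArg (fun T : Module.End ℝ M => T x) (hπL r)
    simpa [Module.End.mul_apply, hx] using h
  have memΛ : ∀ r (x : M), π (r + 2) x = x → π r (Λ x) = Λ x := by
    intro r x hx
    have h := congrArg (fun T : Module.End ℝ M => T x) (hπΛ r)
    simpa [Module.End.mul_apply, hx] using h
  have memLpow : ∀ m r (x : M), π r x = x → π (r + 2 * m) ((L ^ m) x) = (L ^ m) x := by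
    intro m
    induction m with
    | zero => intro r x hx; simpa using hx
    | succ m ihm =>
      intro r x hx
      have h1 : (L ^ (m + 1)) x = (L ^ m) (L x) := by
        rw [pow_succ, Module.End.mul_apply]
      have h2 := ihm (r + 2) (L x) (memL r x hx)
      rw [h1]
      rw [show r + 2 * (m + 1) = r + 2 + 2 * m by omega]
      exact h2
  have memΛpow : ∀ m r (x : M), π (r + 2 * m) x = x → π r ((Λ ^ m) x) = (Λ ^ m) x := by
    intro m
    induction m with
    | zero => intro r x hx; simpa using hx
    | succ m ihm =>
      intro r x hx
      have h1 : (Λ ^ (m + 1)) x = (Λ ^ m) (Λ x) := by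
        rw [pow_succ, Module.End.mul_apply]
      have hx' : π (r + 2 * m + 2) x = x := by
        rw [show r + 2 * m + 2 = r + 2 * (m + 1) by omega]; exact hx
      rw [h1]
      exact ihm r (Λ x) (memΛ (r + 2 * m) x hx')
  have vanish : ∀ r (x : M), 2 * n < r → π r x = x → x = 0 := by
    intro r x h hx
    rw [← hx, hsupp r h]; rfl
  have idem' : ∀ r (x : M), π r (π r x) = π r x := by
    intro r x
    have h := congrArg (fun T : Module.End ℝ M => T x) (hidem r)
    simpa [Module.End.mul_apply] using h
  have Aeig : ∀ r (x : M), π r x = x → A x = ((n : ℝ) - r) • x := by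
    intro r x hx
    by_cases hr : r < 2 * n + 1
    · rw [hA]
      rw [LinearMap.sum_apply]
      have hterm : ∀ s ∈ Finset.range (2 * n + 1), s ≠ r →
          (((n : ℝ) - s) • π s) x = 0 := by
        intro s _ hs
        have h0 : π s x = 0 := by
          rw [← hx]
          have h := congrArg (fun T : Module.End ℝ M => T x) (hortho s r hs)
          simpa [Module.End.mul_apply] using h
        simp [LinearMap.smul_apply, h0]
      rw [Finset.sum_eq_single r hterm (fun h => absurd (Finset.mem_range.2 hr) h)]
      simp [LinearMap.smul_apply, hx]
    · have hx0 : x = 0 := vanish r x (by omega) hx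
      simp [hx0]
  -- commutators
  have hdL : d * L = L * d := (sub_eq_zero.mp hLd).symm
  have hdLpow : ∀ m, d * L ^ m = L ^ m * d := by
    intro m
    induction m with
    | zero => simp
    | succ m ih => rw [pow_succ, ← mul_assoc, ih, mul_assoc, hdL, ← mul_assoc]
  have δL : δ * L = L * δ + d := by
    rw [sub_eq_iff_eq_add.mp hLδ]; abel
  have ΛL : Λ * L = L * Λ + A := by
    rw [sub_eq_iff_eq_add.mp hΛL]; abel
  have LΛ : L * Λ = Λ * L - A := by rw [ΛL]; abel
  have AL : A * L = L * A - (2 : ℝ) • L := by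
    rw [sub_eq_iff_eq_add.mp hAL]; module
  have AΛ : A * Λ = Λ * A + (2 : ℝ) • Λ := by
    rw [sub_eq_iff_eq_add.mp hAΛ]; module
  have δΛ : δ * Λ = Λ * δ := (sub_eq_zero.mp hΛδ).symm
  have dΛ : d * Λ = δ + Λ * d := by rw [hδ]; abel
  have dδ : d * δ = -(δ * d) := by
    have h1 : d * (d * Λ) = 0 := by rw [← mul_assoc, hd2, zero_mul]
    have h2 : (Λ * d) * d = 0 := by rw [mul_assoc, hd2, mul_zero]
    rw [hδ, mul_sub, sub_mul, h1, h2, mul_assoc d Λ d]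
    abel
  have δLpow : ∀ m : ℕ, δ * L ^ (m + 1) = L ^ (m + 1) * δ + ((m : ℝ) + 1) • (L ^ m * d) := by
    intro m
    induction m with
    | zero => simpa using δL
    | succ m ih =>
      calc δ * L ^ (m + 2) = (δ * L ^ (m + 1)) * L := by rw [pow_succ, mul_assoc]
      _ = (L ^ (m + 1) * δ + ((m : ℝ) + 1) • (L ^ m * d)) * L := by rw [ih]
      _ = L ^ (m + 1) * (δ * L) + ((m : ℝ) + 1) • (L ^ m * (d * L)) := by
          rw [add_mul, smul_mul_assoc, mul_assoc, mul_assoc]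
      _ = L ^ (m + 1) * (L * δ + d) + ((m : ℝ) + 1) • (L ^ m * (L * d)) := by rw [δL, hdL]
      _ = (L ^ (m + 2) * δ + L ^ (m + 1) * d) + ((m : ℝ) + 1) • (L ^ (m + 1) * d) := by
          rw [mul_add, ← mul_assoc, ← pow_succ, ← mul_assoc, ← pow_succ]
      _ = L ^ (m + 1 + 1) * δ + ((((m : ℕ) + 1 : ℕ) : ℝ) + 1) • (L ^ (m + 1) * d) := by
          push_cast; module
  have ΛLpow : ∀ m : ℕ, Λ * L ^ (m + 1)
      = L ^ (m + 1) * Λ + ((m : ℝ) + 1) • (L ^ m * A) - (((m : ℝ) + 1) * (m : ℝ)) • L ^ m := by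
    intro m
    induction m with
    | zero => simpa using ΛL
    | succ m ih =>
      calc Λ * L ^ (m + 2) = (Λ * L ^ (m + 1)) * L := by rw [pow_succ, mul_assoc]
      _ = (L ^ (m + 1) * Λ + ((m : ℝ) + 1) • (L ^ m * A)
            - (((m : ℝ) + 1) * (m : ℝ)) • L ^ m) * L := by rw [ih]
      _ = L ^ (m + 1) * (Λ * L) + ((m : ℝ) + 1) • (L ^ m * (A * L))
            - (((m : ℝ) + 1) * (m : ℝ)) • (L ^ m * L) := by
          rw [sub_mul, add_mul, smul_mul_assoc, smul_mul_assoc, mul_assoc, mul_assoc]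
      _ = L ^ (m + 1) * (L * Λ + A) + ((m : ℝ) + 1) • (L ^ m * (L * A - (2 : ℝ) • L))
            - (((m : ℝ) + 1) * (m : ℝ)) • L ^ (m + 1) := by
          rw [ΛL, AL, ← pow_succ]
      _ = (L ^ (m + 2) * Λ + L ^ (m + 1) * A)
            + ((m : ℝ) + 1) • (L ^ (m + 1) * A - (2 : ℝ) • L ^ (m + 1))
            - (((m : ℝ) + 1) * (m : ℝ)) • L ^ (m + 1) := by
          rw [mul_add, ← mul_assoc, ← pow_succ, mul_sub, ← mul_assoc, ← pow_succ,
            mul_smul_comm, ← pow_succ]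
      _ = L ^ (m + 1 + 1) * Λ + ((((m + 1 : ℕ)) : ℝ) + 1) • (L ^ (m + 1) * A)
            - (((((m + 1 : ℕ)) : ℝ) + 1) * (((m + 1 : ℕ)) : ℝ)) • L ^ (m + 1) := by
          push_cast; module
  have LΛpow : ∀ m : ℕ, L * Λ ^ (m + 1)
      = Λ ^ (m + 1) * L - ((m : ℝ) + 1) • (Λ ^ m * A) - (((m : ℝ) + 1) * (m : ℝ)) • Λ ^ m := by
    intro m
    induction m with
    | zero => simpa using LΛ
    | succ m ih =>
      calc L * Λ ^ (m + 2) = (L * Λ ^ (m + 1)) * Λ := by rw [pow_succ, mul_assoc]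
      _ = (Λ ^ (m + 1) * L - ((m : ℝ) + 1) • (Λ ^ m * A)
            - (((m : ℝ) + 1) * (m : ℝ)) • Λ ^ m) * Λ := by rw [ih]
      _ = Λ ^ (m + 1) * (L * Λ) - ((m : ℝ) + 1) • (Λ ^ m * (A * Λ))
            - (((m : ℝ) + 1) * (m : ℝ)) • (Λ ^ m * Λ) := by
          rw [sub_mul, sub_mul, smul_mul_assoc, smul_mul_assoc, mul_assoc, mul_assoc]
      _ = Λ ^ (m + 1) * (Λ * L - A) - ((m : ℝ) + 1) • (Λ ^ m * (Λ * A + (2 : ℝ) • Λ))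
            - (((m : ℝ) + 1) * (m : ℝ)) • Λ ^ (m + 1) := by
          rw [LΛ, AΛ, ← pow_succ]
      _ = (Λ ^ (m + 2) * L - Λ ^ (m + 1) * A)
            - ((m : ℝ) + 1) • (Λ ^ (m + 1) * A + (2 : ℝ) • Λ ^ (m + 1))
            - (((m : ℝ) + 1) * (m : ℝ)) • Λ ^ (m + 1) := by
          rw [mul_sub, ← mul_assoc, ← pow_succ, mul_add, ← mul_assoc, ← pow_succ,
            mul_smul_comm, ← pow_succ]
      _ = Λ ^ (m + 1 + 1) * L - ((((m + 1 : ℕ)) : ℝ) + 1) • (Λ ^ (m + 1) * A)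
            - (((((m + 1 : ℕ)) : ℝ) + 1) * (((m + 1 : ℕ)) : ℝ)) • Λ ^ (m + 1) := by
          push_cast; module
  have powapp : ∀ (T : Module.End ℝ M) (m : ℕ) (x : M), (T ^ (m + 1)) x = T ((T ^ m) x) := by
    intro T m x
    rw [show m + 1 = 1 + m by omega, pow_add, pow_one, Module.End.mul_apply]
  have powapp' : ∀ (T : Module.End ℝ M) (m : ℕ) (x : M), (T ^ (m + 1)) x = (T ^ m) (T x) := by
    intro T m x
    rw [pow_succ, Module.End.mul_apply]
  -- harmonic preservation
  have harmL : ∀ x : M, d x = 0 → δ x = 0 → d (L x) = 0 ∧ δ (L x) = 0 := by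
    intro x hdx hδx
    constructor
    · have h : d (L x) = (d * L) x := rfl
      rw [h, hdL, Module.End.mul_apply, hdx, map_zero]
    · have h : δ (L x) = (δ * L) x := rfl
      rw [h, δL, LinearMap.add_apply, Module.End.mul_apply, hδx, map_zero, hdx, add_zero]
  have harmΛ : ∀ x : M, d x = 0 → δ x = 0 → d (Λ x) = 0 ∧ δ (Λ x) = 0 := by
    intro x hdx hδx
    constructor
    · have h : d (Λ x) = (d * Λ) x := rfl
      rw [h, dΛ, LinearMap.add_apply, Module.End.mul_apply, hδx, hdx, map_zero, add_zero]
    · have h : δ (Λ x) = (δ * Λ) x := rfl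
      rw [h, δΛ, Module.End.mul_apply, hδx, map_zero]
  have harmLpow : ∀ (m : ℕ) (x : M), d x = 0 → δ x = 0 →
      d ((L ^ m) x) = 0 ∧ δ ((L ^ m) x) = 0 := by
    intro m
    induction m with
    | zero => intro x hdx hδx; simpa using ⟨hdx, hδx⟩
    | succ m ihm =>
      intro x hdx hδx
      have h1 : (L ^ (m + 1)) x = (L ^ m) (L x) := by rw [pow_succ, Module.End.mul_apply]
      rw [h1]
      exact ihm (L x) (harmL x hdx hδx).1 (harmL x hdx hδx).2
  have harmΛpow : ∀ (m : ℕ) (x : M), d x = 0 → δ x = 0 →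
      d ((Λ ^ m) x) = 0 ∧ δ ((Λ ^ m) x) = 0 := by
    intro m
    induction m with
    | zero => intro x hdx hδx; simpa using ⟨hdx, hδx⟩
    | succ m ihm =>
      intro x hdx hδx
      have h1 : (Λ ^ (m + 1)) x = (Λ ^ m) (Λ x) := by rw [pow_succ, Module.End.mul_apply]
      rw [h1]
      exact ihm (Λ x) (harmΛ x hdx hδx).1 (harmΛ x hdx hδx).2
  -- closed primitive-detecting claim
  have claimP : ∀ (s : ℕ) (x : M), s ≤ n → π (n - s) x = x → (L ^ (s + 1)) x = 0 →
      Λ x = 0 := by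
    intro s x hs hx hLx
    have hΛeq : Λ x = (Λ * π (n - s)) x := by rw [Module.End.mul_apply, hx]
    rcases e : n - s with _ | ns
    · rw [e] at hΛeq; rw [hΛeq, hΛ0, LinearMap.zero_apply]
    · rcases ns with _ | t
      · rw [e] at hΛeq; rw [hΛeq, hΛ1, LinearMap.zero_apply]
      · have hs2 : s + 2 ≤ n := by omega
        have hAx : A x = (s : ℝ) • x := by
          rw [Aeig (n - s) x hx, Nat.cast_sub hs]; congr 1; ring
        have key : (L ^ (s + 1)) (Λ x) = 0 := by
          have h := congrArg (fun T : Module.End ℝ M => T x) (ΛLpow s)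
          simp only [Module.End.mul_apply, LinearMap.add_apply, LinearMap.sub_apply,
            LinearMap.smul_apply] at h
          rw [hLx, map_zero, hAx, map_smul, smul_smul] at h
          have h' := h.symm
          rw [add_sub_assoc, sub_self, add_zero] at h'
          exact h'
        have key2 : (L ^ (s + 2)) (Λ x) = 0 := by
          have h : (L ^ (s + 2)) (Λ x) = L ((L ^ (s + 1)) (Λ x)) := by
            rw [pow_succ', Module.End.mul_apply]
          rw [h, key, map_zero]
        have hmem : π (n - (s + 2)) (Λ x) = Λ x := by
          apply memΛ
          rw [show n - (s + 2) + 2 = n - s by omega]; exact hx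
        have hinj := (hiso (s + 2) hs2).injOn
        exact hinj (Set.mem_setOf.2 hmem) (Set.mem_setOf.2 (map_zero (π (n - (s + 2)))))
          (by rw [key2, map_zero])
  -- hard Lefschetz on harmonic elements
  have HLharm : ∀ m : ℕ, ∀ k : ℕ, 2 * n + 1 ≤ m + k → ∀ u : M,
      π (n + k) u = u → d u = 0 → δ u = 0 →
      ∃ v : M, π (n - k) v = v ∧ d v = 0 ∧ δ v = 0 ∧ (L ^ k) v = u := by
    intro m
    induction m with
    | zero =>
      intro k hk u hu _ _
      have hu0 : u = 0 := vanish (n + k) u (by omega) hu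
      exact ⟨0, map_zero _, map_zero _, map_zero _, by rw [map_zero, hu0]⟩
    | succ m IH =>
      intro k hk u hu hdu hδu
      by_cases hkn : n < k
      · have hu0 : u = 0 := vanish (n + k) u (by omega) hu
        exact ⟨0, map_zero _, map_zero _, map_zero _, by rw [map_zero, hu0]⟩
      · have hdLu := harmL u hdu hδu
        obtain ⟨a, ha1, ha2, hda, hδa, hLa⟩ :
            ∃ a : M, π (n + k) ((L ^ (k + 1)) a) = (L ^ (k + 1)) a ∧
              π (n - k) (L a) = L a ∧ d a = 0 ∧ δ a = 0 ∧ (L ^ (k + 2)) a = L u := by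
          by_cases hk2 : n < k + 2
          · have hLu0 : L u = 0 := vanish (n + k + 2) (L u) (by omega) (memL (n + k) u hu)
            exact ⟨0, by rw [map_zero, map_zero], by rw [map_zero, map_zero],
              map_zero _, map_zero _, by rw [map_zero, hLu0]⟩
          · have hmemLu : π (n + (k + 2)) (L u) = L u := by
              rw [show n + (k + 2) = n + k + 2 by omega]; exact memL (n + k) u hu
            obtain ⟨a, ha, hda, hδa, hLa⟩ := IH (k + 2) (by omega) (L u) hmemLu hdLu.1 hdLu.2
            refine ⟨a, ?_, ?_, hda, hδa, hLa⟩
            · have h := memLpow (k + 1) (n - (k + 2)) a ha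
              rwa [show n - (k + 2) + 2 * (k + 1) = n + k by omega] at h
            · have h := memL (n - (k + 2)) a ha
              rwa [show n - (k + 2) + 2 = n - k by omega] at h
        set u' := u - (L ^ (k + 1)) a with hu'def
        have hu'mem : π (n + k) u' = u' := by rw [hu'def, map_sub, hu, ha1]
        have hLu' : L u' = 0 := by
          rw [hu'def, map_sub]
          rw [← powapp L (k + 1) a, hLa, sub_self]
        have hdu' : d u' = 0 := by
          rw [hu'def, map_sub, hdu]
          have h : d ((L ^ (k + 1)) a) = (L ^ (k + 1)) (d a) := by
            rw [← Module.End.mul_apply, hdLpow, Module.End.mul_apply]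
          rw [h, hda, map_zero, sub_zero]
        have hδu' : δ u' = 0 := by
          rw [hu'def, map_sub, hδu]
          have h := congrArg (fun T : Module.End ℝ M => T a) (δLpow k)
          simp only [Module.End.mul_apply, LinearMap.add_apply, LinearMap.smul_apply] at h
          rw [hδa, hda, map_zero, map_zero, smul_zero, add_zero] at h
          rw [h, sub_zero]
        have hAu' : A u' = (-(k : ℝ)) • u' := by
          rw [Aeig (n + k) u' hu'mem]; congr 1; push_cast; ring
        have step : ∀ j : ℕ, L ((Λ ^ (j + 1)) u')
            = (((j : ℝ) + 1) * ((k : ℝ) - (j : ℝ))) • ((Λ ^ j) u') := by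
          intro j
          have h := congrArg (fun T : Module.End ℝ M => T u') (LΛpow j)
          simp only [Module.End.mul_apply, LinearMap.sub_apply, LinearMap.smul_apply] at h
          rw [hLu', map_zero, hAu', map_smul, smul_smul] at h
          rw [h]; module
        have iter : ∀ j : ℕ, j ≤ k → ∃ c : ℝ, 0 < c ∧ (L ^ j) ((Λ ^ j) u') = c • u' := by
          intro j
          induction j with
          | zero => intro _; exact ⟨1, one_pos, by simp⟩
          | succ j ihj =>
            intro hj
            obtain ⟨c, hc, hLc⟩ := ihj (by omega)
            refine ⟨(((j : ℝ) + 1) * ((k : ℝ) - (j : ℝ))) * c, ?_, ?_⟩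
            · have hjk : (j : ℝ) < (k : ℝ) := by exact_mod_cast (by omega : j < k)
              have h1 : (0 : ℝ) < (j : ℝ) + 1 := by positivity
              have h2 : (0 : ℝ) < (k : ℝ) - (j : ℝ) := by linarith
              exact mul_pos (mul_pos h1 h2) hc
            · rw [powapp' L j, step j, map_smul, hLc, smul_smul]
        obtain ⟨c, hc, hLΛc⟩ := iter k le_rfl
        refine ⟨c⁻¹ • ((Λ ^ k) u') + L a, ?_, ?_, ?_, ?_⟩
        · rw [map_add, map_smul, ha2]
          have hm : π (n - k) ((Λ ^ k) u') = (Λ ^ k) u' := by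
            apply memΛpow
            rw [show n - k + 2 * k = n + k by omega]; exact hu'mem
          rw [hm]
        · rw [map_add, map_smul, (harmΛpow k u' hdu' hδu').1, (harmL a hda hδa).1,
            smul_zero, add_zero]
        · rw [map_add, map_smul, (harmΛpow k u' hdu' hδu').2, (harmL a hda hδa).2,
            smul_zero, add_zero]
        · rw [map_add, map_smul, hLΛc, smul_smul, inv_mul_cancel₀ (ne_of_gt hc), one_smul,
            ← powapp' L k a]
          rw [hu'def]
          abel
  -- main induction: hard Lefschetz on cohomology gives harmonic representatives
  have main : (∀ r ≤ n, ∀ x : M, π (n + r) x = x → d x = 0 →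
        ∃ y : M, π (n - r) y = y ∧ d y = 0 ∧ ∃ z : M, x - (L ^ r) y = d z) →
      ∀ m : ℕ, ∀ k, k < m → ∀ x : M, π k x = x → d x = 0 →
        ∃ y : M, π k y = y ∧ d y = 0 ∧ δ y = 0 ∧ ∃ z : M, x - y = d z := by
    intro hHL m
    induction m with
    | zero => intro k hk; omega
    | succ m IH =>
      intro k hk x hx hdx
      by_cases hbig : 2 * n < k
      · have hx0 : x = 0 := vanish k x hbig hx
        exact ⟨0, map_zero _, map_zero _, map_zero _, 0,
          by rw [hx0, map_zero, sub_zero]⟩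
      · by_cases hkn : k ≤ n
        · -- lower half
          set s := n - k with hsdef
          by_cases hk2 : k < 2
          · -- primitive case
            have hL1 : (L ^ (s + 1)) x = 0 := by
              apply vanish (k + 2 * (s + 1)) _ (by omega)
              exact memLpow (s + 1) k x hx
            have hΛx : Λ x = 0 := by
              apply claimP s x (by omega) _ hL1
              rw [show n - s = k by omega]; exact hx
            have hδx : δ x = 0 := by
              rw [hδ, LinearMap.sub_apply, Module.End.mul_apply, Module.End.mul_apply,
                hΛx, hdx, map_zero, map_zero, sub_zero]
            exact ⟨x, hx, hdx, hδx, 0, by rw [map_zero, sub_self]⟩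
          · -- k ≥ 2
            have hs2 : s + 2 ≤ n := by omega
            have hXmem : π (n + (s + 2)) ((L ^ (s + 1)) x) = (L ^ (s + 1)) x := by
              have h := memLpow (s + 1) k x hx
              rwa [show k + 2 * (s + 1) = n + (s + 2) by omega] at h
            have hdX : d ((L ^ (s + 1)) x) = 0 := by
              rw [← Module.End.mul_apply, hdLpow, Module.End.mul_apply, hdx, map_zero]
            obtain ⟨y1, hy1mem, hdy1, z1, hz1⟩ := hHL (s + 2) hs2 _ hXmem hdX
            set z := π (2 * n - k + 1) z1 with hzdef
            have hzmem : π (n + (s + 1)) z = z := by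
              rw [hzdef, show n + (s + 1) = 2 * n - k + 1 by omega]
              exact idem' _ _
            have hy1L : π (n + (s + 2)) ((L ^ (s + 2)) y1) = (L ^ (s + 2)) y1 := by
              have h := memLpow (s + 2) (n - (s + 2)) y1 hy1mem
              rwa [show n - (s + 2) + 2 * (s + 2) = n + (s + 2) by omega] at h
            have hdz : d z = (L ^ (s + 1)) x - (L ^ (s + 2)) y1 := by
              have h1 : d z = π (2 * n - k + 2) (d z1) := by
                rw [hzdef, ← Module.End.mul_apply, ← hπd, Module.End.mul_apply]
              rw [h1, ← hz1, map_sub,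
                show 2 * n - k + 2 = n + (s + 2) by omega, hXmem, hy1L]
            -- lift z
            obtain ⟨w, hwmem, hLw⟩ :=
              (hiso (s + 1) (by omega)).surjOn (Set.mem_setOf.2 hzmem)
            have hwmem' : π (n - (s + 1)) w = w := hwmem
            set x' := x - L y1 - d w with hx'def
            have hx'mem : π k x' = x' := by
              rw [hx'def, map_sub, map_sub, hx]
              have h1 : π k (L y1) = L y1 := by
                have h := memL (n - (s + 2)) y1 hy1mem
                rwa [show n - (s + 2) + 2 = k by omega] at h
              have h2 : π k (d w) = d w := by
                have h := memd (n - (s + 1)) w hwmem'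
                rwa [show n - (s + 1) + 1 = k by omega] at h
              rw [h1, h2]
            have hdx' : d x' = 0 := by
              rw [hx'def, map_sub, map_sub, hdx]
              have h1 : d (L y1) = 0 := by
                rw [← Module.End.mul_apply, hdL, Module.End.mul_apply, hdy1, map_zero]
              have h2 : d (d w) = 0 := by
                rw [← Module.End.mul_apply, hd2, LinearMap.zero_apply]
              rw [h1, h2, sub_zero, sub_zero]
            have hLx' : (L ^ (s + 1)) x' = 0 := by
              rw [hx'def, map_sub, map_sub]
              have h1 : (L ^ (s + 1)) (L y1) = (L ^ (s + 2)) y1 := (powapp' L (s + 1) y1).symm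
              have h2 : (L ^ (s + 1)) (d w) = d z := by
                rw [← Module.End.mul_apply, ← hdLpow, Module.End.mul_apply, hLw]
              rw [h1, h2, hdz]
              abel
            have hΛx' : Λ x' = 0 := by
              apply claimP s x' (by omega) _ hLx'
              rw [show n - s = k by omega]; exact hx'mem
            have hδx' : δ x' = 0 := by
              rw [hδ, LinearMap.sub_apply, Module.End.mul_apply, Module.End.mul_apply,
                hΛx', hdx', map_zero, map_zero, sub_zero]
            -- recurse on y1 (degree k - 2)
            have hy1mem' : π (k - 2) y1 = y1 := by
              rwa [show k - 2 = n - (s + 2) by omega]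
            obtain ⟨y2, hy2mem, hdy2, hδy2, u, hu⟩ := IH (k - 2) (by omega) y1 hy1mem' hdy1
            refine ⟨x' + L y2, ?_, ?_, ?_, L u + w, ?_⟩
            · rw [map_add, hx'mem]
              have h1 : π k (L y2) = L y2 := by
                have h := memL (k - 2) y2 hy2mem
                rwa [show k - 2 + 2 = k by omega] at h
              rw [h1]
            · rw [map_add, hdx']
              rw [← Module.End.mul_apply, hdL, Module.End.mul_apply, hdy2, map_zero, add_zero]
            · rw [map_add, hδx']
              have h1 : δ (L y2) = 0 := by
                have h : δ (L y2) = (δ * L) y2 := rfl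
                rw [h, δL, LinearMap.add_apply, Module.End.mul_apply, hδy2, map_zero,
                  hdy2, add_zero]
              rw [h1, add_zero]
            · have h1 : d (L u) = L (d u) := by
                rw [← Module.End.mul_apply, hdL, Module.End.mul_apply]
              rw [map_add, h1, ← hu, map_sub, hx'def]
              abel
        · -- upper half
          set s := k - n with hsdef
          have hs1 : 1 ≤ s := by omega
          have hsn : s ≤ n := by omega
          have hxmem : π (n + s) x = x := by rwa [show n + s = k by omega]
          obtain ⟨y1, hy1mem, hdy1, z1, hz1⟩ := hHL s hsn x hxmem hdx
          obtain ⟨y2, hy2mem, hdy2, hδy2, u, hu⟩ := IH (n - s) (by omega) y1 hy1mem hdy1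
          refine ⟨(L ^ s) y2, ?_, ?_, ?_, z1 + (L ^ s) u, ?_⟩
          · have h := memLpow s (n - s) y2 hy2mem
            rwa [show n - s + 2 * s = k by omega] at h
          · rw [← Module.End.mul_apply, hdLpow, Module.End.mul_apply, hdy2, map_zero]
          · obtain ⟨t, ht⟩ : ∃ t, s = t + 1 := ⟨s - 1, by omega⟩
            have h := congrArg (fun T : Module.End ℝ M => T y2) (δLpow t)
            simp only [Module.End.mul_apply, LinearMap.add_apply, LinearMap.smul_apply] at h
            rw [hδy2, hdy2, map_zero, map_zero, smul_zero, add_zero] at h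
            rw [ht]
            exact h
          · have h1 : d ((L ^ s) u) = (L ^ s) (d u) := by
              rw [← Module.End.mul_apply, hdLpow, Module.End.mul_apply]
            rw [map_add, h1, ← hu, map_sub]
            calc x - (L ^ s) y2 = (x - (L ^ s) y1) + ((L ^ s) y1 - (L ^ s) y2) := by abel
            _ = d z1 + ((L ^ s) y1 - (L ^ s) y2) := by rw [hz1]
  -- assemble the equivalence
  constructor
  · intro h1 r hr x hx hdx
    obtain ⟨y, hymem, hdy, hδy, z, hz⟩ := h1 (n + r) x hx hdx
    obtain ⟨v, hvmem, hdv, _, hLv⟩ := HLharm (2 * n + 1) r (by omega) y hymem hdy hδy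
    exact ⟨v, hvmem, hdv, z, by rw [hLv]; exact hz⟩
  · intro h2 r x hx hdx
    obtain ⟨y, hymem, hdy, hδy, z, hz⟩ := main h2 (r + 1) r (by omega) x hx hdx
    exact ⟨y, hymem, hdy, hδy, z, hz⟩
end
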